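/- arXiv:2510.17099 — 8 statements merged into one kernel-verified Lean document; each statement's English description precedes it below -/
import Mathlib

section
/- Let C be a finite family of subsets of an n-element ground set. If |C| > ∑_{i=0}^{k-1} binom(n, i), then there exists a set S of size k that is shattered by C, i.e., for every subset A ⊆ S there exists a set T ∈ C with S ∩ T = A. -/
/-!
By Pajor's variant of the Sauer–Shelah lemma, a family `C` shatters at least `|C|` sets. All
shattered sets have size at most the VC-dimension `d` of `C`, so `|C| ≤ ∑_{i ≤ d} binom(n, i)`.
The hypothesis therefore forces `k ≤ d`, and since shattering passes to subsets, cutting a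
shattered set of size `d` down to size `k` gives the required set.
-/

open Finset

namespace Finset

variable {α : Type*} [DecidableEq α] {𝒜 : Finset (Finset α)} {k : ℕ}

lemma exists_shatters_card_eq_vcDim (h𝒜 : 𝒜.Nonempty) : ∃ s, 𝒜.Shatters s ∧ #s = 𝒜.vcDim := by
  have hne : 𝒜.shatterer.Nonempty := ⟨∅, mem_shatterer.2 (shatters_empty.2 h𝒜)⟩
  obtain ⟨s, hs, hcard⟩ := exists_mem_eq_sup _ hne card
  exact ⟨s, mem_shatterer.1 hs, hcard.symm⟩

lemma exists_shatters_card_eq (h𝒜 : 𝒜.Nonempty) (hk : k ≤ 𝒜.vcDim) :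
    ∃ s, #s = k ∧ 𝒜.Shatters s := by
  obtain ⟨s, hs, hcard⟩ := exists_shatters_card_eq_vcDim h𝒜
  obtain ⟨t, hts, htk⟩ := exists_subset_card_eq (hcard ▸ hk)
  exact ⟨t, htk, hs.mono_right hts⟩

lemma le_vcDim_of_sum_choose_lt [Fintype α]
    (h : ∑ i ∈ range k, (Fintype.card α).choose i < #𝒜) : k ≤ 𝒜.vcDim := by
  by_contra! hlt
  have hsub : Iic 𝒜.vcDim ⊆ range k := fun i hi ↦ mem_range.2 ((mem_Iic.1 hi).trans_lt hlt)
  have := calc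
    #𝒜 ≤ #𝒜.shatterer := card_le_card_shatterer 𝒜
    _ ≤ ∑ i ∈ Iic 𝒜.vcDim, (Fintype.card α).choose i := card_shatterer_le_sum_vcDim
    _ ≤ ∑ i ∈ range k, (Fintype.card α).choose i := sum_le_sum_of_subset hsub
  omega

end Finset

theorem sauer_shelah (n k : ℕ) (C : Finset (Finset (Fin n)))
    (h : ∑ i ∈ Finset.range k, Nat.choose n i < C.card) :
    ∃ S : Finset (Fin n), S.card = k ∧ ∀ A ⊆ S, ∃ T ∈ C, S ∩ T = A := by
  have hC : C.Nonempty := card_pos.1 ((Nat.zero_le _).trans_lt h)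
  have hk : k ≤ C.vcDim := le_vcDim_of_sum_choose_lt (by rwa [Fintype.card_fin])
  obtain ⟨S, hS, hshatters⟩ := exists_shatters_card_eq hC hk
  exact ⟨S, hS, fun A hA ↦ hshatters hA⟩
end

section
/- Let d, m be positive integers with 1 ≤ m ≤ d/2, and let X = {x ∈ {0,1}^d : ∑_i x[i] = m}. Define the dual norm ‖z‖_* = max_{x ∈ X} |⟨x, z⟩| for z ∈ ℝ^d. Then for any y ∈ ℝ^d with ‖y‖_* ≤ 1 and any z ∈ ℝ^d, we have ⟨y, z⟩ ≤ 3‖z‖_∞ + (1/m)‖z‖_1. -/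
/-!
Split the coordinates of `y` at the threshold `1/m`. The small ones contribute at most
`(1/m) ‖z‖₁` to `⟨y, z⟩`, so it suffices to show that the large ones have total mass at most `3`.
Let `P` and `N` be the coordinates with `y i > 1/m` and `y i < -1/m`; replacing `y` by `-y` if
necessary, `#P ≤ #N`. An `m`-set inside `N` would have sum `< -1`, so `#P ≤ #N < m`. Since `d ≥ 2m`, we can complete
`P` to an `m`-set by a set `T` of small coordinates, and `N` by a subset `T' ⊆ T`. The two `m`-set
constraints give `∑_P y - ∑_N y ≤ 2 - ∑_{T \ T'} y ≤ 2 + #(T \ T') / m ≤ 3`.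
-/

open Finset

variable {ι : Type*}

lemma abs_sum_le_one_of_card_eq [Fintype ι] {m : ℕ} {y : ι → ℝ}
    (hy : ∀ x : ι → ℝ, (∀ i, x i = 0 ∨ x i = 1) → (∑ i, x i) = (m : ℝ) →
      |∑ i, x i * y i| ≤ 1)
    {S : Finset ι} (hS : #S = m) : |∑ i ∈ S, y i| ≤ 1 := by
  classical
  simpa [ite_mul] using hy (fun i => if i ∈ S then 1 else 0)
    (fun i => by by_cases h : i ∈ S <;> simp [h]) (by simp [hS])

lemma sum_abs_filter_lt_abs [Fintype ι] {t : ℝ} (ht : 0 ≤ t) (y : ι → ℝ) :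
    ∑ i with t < |y i|, |y i| = ∑ i with t < y i, y i - ∑ i with y i < -t, y i := by
  simp only [sum_filter, ← sum_sub_distrib]
  refine sum_congr rfl fun i _ => ?_
  rcases le_or_gt 0 (y i) with h | h
  · rw [abs_of_nonneg h]; split_ifs <;> linarith
  · rw [abs_of_neg h]; split_ifs <;> linarith

lemma sum_mul_le_of_threshold [Fintype ι] {t : ℝ} (ht : 0 ≤ t) (y z : ι → ℝ) :
    ∑ i, y i * z i ≤ (∑ i with t < |y i|, |y i|) * (⨆ i, |z i|) + t * ∑ i, |z i| := by
  have hz : ∀ i, |z i| ≤ ⨆ j, |z j| := le_ciSup (Set.finite_range _).bddAbove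
  calc ∑ i, y i * z i ≤ ∑ i, |y i| * |z i| :=
        sum_le_sum fun i _ => abs_mul (y i) (z i) ▸ le_abs_self _
    _ = ∑ i with t < |y i|, |y i| * |z i| + ∑ i with ¬t < |y i|, |y i| * |z i| :=
        (sum_filter_add_sum_filter_not _ _ _).symm
    _ ≤ ∑ i with t < |y i|, |y i| * (⨆ j, |z j|) + ∑ i with ¬t < |y i|, t * |z i| := by
        gcongr with i _ i hi
        · exact hz i
        · exact not_lt.mp (mem_filter.mp hi).2
    _ ≤ (∑ i with t < |y i|, |y i|) * (⨆ i, |z i|) + t * ∑ i, |z i| := by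
        rw [sum_mul, mul_sum]
        gcongr
        exact filter_subset _ _

section MSets

variable {m : ℕ} {y : ι → ℝ}

lemma card_lt_of_forall_lt_neg_inv (hm : 1 ≤ m)
    (hy : ∀ S : Finset ι, #S = m → |∑ i ∈ S, y i| ≤ 1) {N : Finset ι}
    (hN : ∀ i ∈ N, y i < -(1 / m)) : #N < m := by
  by_contra! h
  obtain ⟨S, hSN, hS⟩ := exists_subset_card_eq h
  have hlt : ∑ i ∈ S, y i < ∑ _i ∈ S, -(1 / (m : ℝ)) :=
    sum_lt_sum_of_nonempty (card_pos.mp (by omega)) fun i hi => hN i (hSN hi)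
  have hconst : ∑ _i ∈ S, -(1 / (m : ℝ)) = -1 := by
    have : (m : ℝ) ≠ 0 := by positivity
    rw [sum_const, hS, nsmul_eq_mul]
    field_simp
  linarith [(abs_le.mp (hy S hS)).1]

lemma sum_sub_sum_le_three_of_card_le [Fintype ι] [DecidableEq ι] (hm : 1 ≤ m)
    (hmι : 2 * m ≤ Fintype.card ι) (hy : ∀ S : Finset ι, #S = m → |∑ i ∈ S, y i| ≤ 1)
    {P N : Finset ι} (hN : ∀ i ∈ N, y i < -(1 / m)) (hNc : ∀ i ∉ N, -(1 / m) ≤ y i)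
    (hPN : #P ≤ #N) :
    ∑ i ∈ P, y i - ∑ i ∈ N, y i ≤ 3 := by
  have hNm : #N < m := card_lt_of_forall_lt_neg_inv hm hy hN
  have hfree : m - #P ≤ #(P ∪ N)ᶜ := by
    have := card_union_le P N
    rw [card_compl]
    omega
  obtain ⟨T, hT, hTcard⟩ := exists_subset_card_eq hfree
  obtain ⟨T', hT'T, hT'card⟩ := exists_subset_card_eq (show m - #N ≤ #T by omega)
  have hPT : Disjoint P T := (disjoint_compl_right.mono_left subset_union_left).mono_right hT
  have hNT' : Disjoint N T' :=
    (disjoint_compl_right.mono_left subset_union_right).mono_right (hT'T.trans hT)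
  have hPupper := (abs_le.mp (hy (P ∪ T) (by rw [card_union_of_disjoint hPT]; omega))).2
  have hNlower := (abs_le.mp (hy (N ∪ T') (by rw [card_union_of_disjoint hNT']; omega))).1
  rw [sum_union hPT] at hPupper
  rw [sum_union hNT'] at hNlower
  have hsplit := sum_sdiff (f := y) hT'T
  have hrest : -1 ≤ ∑ i ∈ T \ T', y i := by
    have hcard : (#(T \ T') : ℝ) ≤ m := by
      exact_mod_cast (card_le_card sdiff_subset).trans (by omega : #T ≤ m)
    have hsmall : ∀ i ∈ T \ T', -(1 / (m : ℝ)) ≤ y i := fun i hi =>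
      hNc i fun hiN => (mem_compl.mp (hT (mem_sdiff.mp hi).1)) (mem_union_right _ hiN)
    calc (-1 : ℝ) = m * -(1 / (m : ℝ)) := by field_simp
      _ ≤ #(T \ T') * -(1 / (m : ℝ)) :=
          mul_le_mul_of_nonpos_right hcard (by simp)
      _ ≤ ∑ i ∈ T \ T', y i := by
          simpa only [nsmul_eq_mul] using card_nsmul_le_sum _ _ _ hsmall
  linarith

lemma sum_abs_filter_inv_lt_abs_le_three [Fintype ι] [DecidableEq ι] (hm : 1 ≤ m)
    (hmι : 2 * m ≤ Fintype.card ι) (hy : ∀ S : Finset ι, #S = m → |∑ i ∈ S, y i| ≤ 1) :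
    ∑ i with 1 / (m : ℝ) < |y i|, |y i| ≤ 3 := by
  rw [sum_abs_filter_lt_abs (by positivity)]
  rcases le_total #{i | 1 / (m : ℝ) < y i} #{i | y i < -(1 / m)} with h | h
  · exact sum_sub_sum_le_three_of_card_le hm hmι hy (by simp) (by simp) h
  · have hneg : ∀ S : Finset ι, #S = m → |∑ i ∈ S, -y i| ≤ 1 := fun S hS => by
      simpa only [sum_neg_distrib, abs_neg] using hy S hS
    have := sum_sub_sum_le_three_of_card_le hm hmι hneg (P := {i | y i < -(1 / m)})
      (N := {i | 1 / (m : ℝ) < y i}) (by simp) (fun i hi => by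
        simp only [mem_filter, mem_univ, true_and, not_lt] at hi; linarith) h
    simp only [sum_neg_distrib] at this
    linarith

end MSets

theorem mset_dual_norm_bound (d m : ℕ) (hm : 1 ≤ m) (hmd : 2 * m ≤ d)
    (y z : Fin d → ℝ)
    (hy : ∀ x : Fin d → ℝ, (∀ i, x i = 0 ∨ x i = 1) → (∑ i, x i) = (m : ℝ) →
      |∑ i, x i * y i| ≤ 1) :
    ∑ i, y i * z i ≤ 3 * (⨆ i, |z i|) + (1 / (m : ℝ)) * ∑ i, |z i| := by
  have hbig : ∑ i with 1 / (m : ℝ) < |y i|, |y i| ≤ 3 :=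
    sum_abs_filter_inv_lt_abs_le_three hm (by simpa using hmd)
      fun S hS => abs_sum_le_one_of_card_eq hy hS
  calc ∑ i, y i * z i
      ≤ (∑ i with 1 / (m : ℝ) < |y i|, |y i|) * (⨆ i, |z i|) + 1 / m * ∑ i, |z i| :=
        sum_mul_le_of_threshold (by positivity) y z
    _ ≤ 3 * (⨆ i, |z i|) + (1 / (m : ℝ)) * ∑ i, |z i| := by
        gcongr
        exact Real.iSup_nonneg fun i => abs_nonneg (z i)
end

section
/- Let d, m be positive integers with 20 ≤ m ≤ d/2. Let X = {x ∈ {0,1}^d : ∑_i x[i] = m} and S = {x ∈ X : |{i ∈ {1,…,m} : x[i] ≠ 1}| ≥ ⌊m/20⌋}. Then |X \ S| / |X| ≤ exp(−(m/20)·ln(d/m)). -/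
/-!
Let `M` be the first `m` coordinates and `k = ⌊m/20⌋`. An `m`-set outside `S` contains at least
`a = m - k + 1` points of `M`, hence contains one of the `C(m, a)` many `a`-subsets of `M`; each
of these lies in only a `(m)_a / (d)_a ≤ (m/d)^a` fraction of all `m`-sets. Comparing with one term of
`(20 + 1)^m` gives `C(m, a) ≤ 21^m / 20^a ≤ 2^(m - 2k)`, so with `m/d ≤ 1/2` the fraction is at most
`(m/d)^(k+1)`, and `k + 1 ≥ m/20`.
-/

namespace Nat

lemma descFactorial_mul_pow_le {m n : ℕ} (hmn : m ≤ n) (a : ℕ) :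
    m.descFactorial a * n ^ a ≤ n.descFactorial a * m ^ a := by
  induction a with
  | zero => simp
  | succ a ih =>
    have step : (m - a) * n ≤ (n - a) * m := by
      rw [Nat.sub_mul, Nat.sub_mul, mul_comm n m]
      exact Nat.sub_le_sub_left (Nat.mul_le_mul_left a hmn) _
    calc m.descFactorial (a + 1) * n ^ (a + 1)
        = ((m - a) * n) * (m.descFactorial a * n ^ a) := by rw [descFactorial_succ, pow_succ]; ring
      _ ≤ ((n - a) * m) * (n.descFactorial a * m ^ a) := Nat.mul_le_mul step ih
      _ = n.descFactorial (a + 1) * m ^ (a + 1) := by rw [descFactorial_succ, pow_succ]; ring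

lemma choose_sub_mul_pow_le {m n a : ℕ} (hmn : m ≤ n) (ham : a ≤ m) :
    (n - a).choose (m - a) * n ^ a ≤ n.choose m * m ^ a := by
  have hid : n.descFactorial a * (n - a).choose (m - a) = n.choose m * m.descFactorial a := by
    rw [descFactorial_eq_factorial_mul_choose, descFactorial_eq_factorial_mul_choose,
      mul_assoc, ← choose_mul ham]
    ring
  refine Nat.le_of_mul_le_mul_left ?_ (descFactorial_pos.mpr (ham.trans hmn))
  calc n.descFactorial a * ((n - a).choose (m - a) * n ^ a)
      = n.choose m * (m.descFactorial a * n ^ a) := by rw [← mul_assoc, hid, mul_assoc]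
    _ ≤ n.choose m * (n.descFactorial a * m ^ a) :=
        Nat.mul_le_mul_left _ (descFactorial_mul_pow_le hmn a)
    _ = n.descFactorial a * (n.choose m * m ^ a) := by ring

lemma choose_mul_pow_le_succ_pow (m j b : ℕ) : m.choose j * b ^ j ≤ (b + 1) ^ m := by
  rcases le_or_gt j m with hjm | hmj
  · rw [add_pow]
    simpa [mul_comm] using Finset.single_le_sum (f := fun i => b ^ i * m.choose i)
      (fun i _ => Nat.zero_le _) (Finset.mem_range.mpr (Nat.lt_succ_of_le hjm))
  · simp [choose_eq_zero_of_lt hmj]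

lemma choose_sub_add_one_le_two_pow {m k : ℕ} (h : 20 * k ≤ m) :
    m.choose (m - k + 1) ≤ 2 ^ (m - 2 * k) := by
  have h21 : 21 ^ m ≤ 20 ^ (m - k + 1) * 2 ^ (m - 2 * k) := by
    obtain ⟨s, rfl⟩ := Nat.exists_eq_add_of_le h
    rw [show 20 * k + s - k + 1 = 19 * k + s + 1 by omega,
      show 20 * k + s - 2 * k = 18 * k + s by omega]
    calc 21 ^ (20 * k + s) = (21 ^ 20) ^ k * 21 ^ s := by rw [pow_add, pow_mul]
      _ ≤ (20 ^ 19 * 2 ^ 18) ^ k * 40 ^ s := by gcongr <;> norm_num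
      _ = 20 ^ (19 * k + s) * 2 ^ (18 * k + s) := by
          rw [mul_pow, pow_add, pow_add, pow_mul, pow_mul, show (40 : ℕ) = 20 * 2 by rfl, mul_pow]
          ring
      _ ≤ 20 ^ (19 * k + s + 1) * 2 ^ (18 * k + s) :=
          Nat.mul_le_mul_right _ (Nat.pow_le_pow_right (by norm_num) (by omega))
  exact Nat.le_of_mul_le_mul_right
    (((choose_mul_pow_le_succ_pow m _ 20).trans h21).trans_eq (mul_comm _ _)) (by positivity)

lemma choose_mul_choose_mul_pow_le {d m k : ℕ} (hk : 0 < k) (hkm : 20 * k ≤ m)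
    (hmd : 2 * m ≤ d) :
    m.choose (m - k + 1) * (d - (m - k + 1)).choose (m - (m - k + 1)) * d ^ (k + 1)
      ≤ d.choose m * m ^ (k + 1) := by
  set a := m - k + 1
  set e := m - 2 * k
  have ha : a = (k + 1) + e := by omega
  refine Nat.le_of_mul_le_mul_right ?_ (pow_pos (by omega : 0 < d) e)
  calc m.choose a * (d - a).choose (m - a) * d ^ (k + 1) * d ^ e
      = m.choose a * ((d - a).choose (m - a) * d ^ a) := by rw [ha, pow_add]; ring
    _ ≤ m.choose a * (d.choose m * m ^ a) :=
        Nat.mul_le_mul_left _ (choose_sub_mul_pow_le (by omega) (by omega))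
    _ = (m.choose a * m ^ e) * (d.choose m * m ^ (k + 1)) := by rw [ha, pow_add]; ring
    _ ≤ (2 ^ e * m ^ e) * (d.choose m * m ^ (k + 1)) := by
        gcongr; exact choose_sub_add_one_le_two_pow hkm
    _ ≤ d ^ e * (d.choose m * m ^ (k + 1)) := by
        rw [← mul_pow]; gcongr
    _ = d.choose m * m ^ (k + 1) * d ^ e := by ring

end Nat

namespace Finset

lemma card_powersetCard_filter_le_card_inter_le {α : Type*} [DecidableEq α] {s M : Finset α}
    (hM : M ⊆ s) {m a : ℕ} (ham : a ≤ m) :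
    #{A ∈ s.powersetCard m | a ≤ #(M ∩ A)} ≤ (#M).choose a * (#s - a).choose (m - a) := by
  have cover : {A ∈ s.powersetCard m | a ≤ #(M ∩ A)} ⊆
      (M.powersetCard a).biUnion fun T => {A ∈ s.powersetCard m | T ⊆ A} := by
    intro A hA
    rw [mem_filter] at hA
    obtain ⟨T, hT, hTcard⟩ := exists_subset_card_eq hA.2
    exact mem_biUnion.mpr ⟨T, mem_powersetCard.mpr ⟨hT.trans inter_subset_left, hTcard⟩,
      mem_filter.mpr ⟨hA.1, hT.trans inter_subset_right⟩⟩
  calc #{A ∈ s.powersetCard m | a ≤ #(M ∩ A)}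
      ≤ ∑ T ∈ M.powersetCard a, #{A ∈ s.powersetCard m | T ⊆ A} :=
        (card_le_card cover).trans card_biUnion_le
    _ = ∑ T ∈ M.powersetCard a, (#s - a).choose (m - a) := by
        refine sum_congr rfl fun T hT => ?_
        rw [mem_powersetCard] at hT
        rw [card_filter_powersetCard_subset _ _ _ (hT.1.trans hM) (hT.2 ▸ ham), hT.2]
    _ = (#M).choose a * (#s - a).choose (m - a) := by
        rw [sum_const, card_powersetCard, smul_eq_mul]

end Finset

namespace Real

lemma inv_pow_le_exp_neg_mul_log {x t : ℝ} {n : ℕ} (hx : 1 ≤ x) (htn : t ≤ n) :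
    x⁻¹ ^ n ≤ exp (-t * log x) := by
  rw [← exp_log (by positivity : 0 < x⁻¹), log_inv, ← exp_nat_mul]
  exact exp_le_exp.mpr (by nlinarith [log_nonneg hx])

end Real

open Finset

theorem mset_bad_set_large (d m : ℕ) (hm : 20 ≤ m) (hmd : 2 * m ≤ d) :
    let X := Finset.powersetCard m (Finset.univ : Finset (Fin d))
    let S := X.filter (fun A =>
      m / 20 ≤ (((Finset.univ : Finset (Fin d)).filter (fun i => i.val < m)) \ A).card)
    ((X \ S).card : ℝ) / (X.card : ℝ) ≤ Real.exp (-((m : ℝ) / 20) * Real.log ((d : ℝ) / m)) := by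
  intro X S
  set k := m / 20
  set M := (univ : Finset (Fin d)).filter (fun i => i.val < m)
  have hM : #M = m := by simp [M, Fin.card_filter_val_lt]; omega
  have hX : #X = d.choose m := by simp [X]
  have hbad : X \ S ⊆ {A ∈ X | m - k + 1 ≤ #(M ∩ A)} := by
    intro A hA
    simp only [S, mem_sdiff, mem_filter, not_and, not_le] at hA
    have hmissing : #(M \ A) < k := hA.2 hA.1
    have := card_inter_add_card_sdiff M A
    exact mem_filter.mpr ⟨hA.1, by omega⟩
  have hcount : #(X \ S) * d ^ (k + 1) ≤ d.choose m * m ^ (k + 1) := by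
    have := card_powersetCard_filter_le_card_inter_le (subset_univ M) (m := m)
      (by omega : m - k + 1 ≤ m)
    rw [hM, card_univ, Fintype.card_fin] at this
    exact (Nat.mul_le_mul_right _ ((card_le_card hbad).trans this)).trans
      (Nat.choose_mul_choose_mul_pow_le (by omega) (by omega) hmd)
  have hd : (0 : ℝ) < d := by exact_mod_cast (by omega : 0 < d)
  have hXpos : (0 : ℝ) < #X := by rw [hX]; exact_mod_cast Nat.choose_pos (by omega)
  rw [div_le_iff₀ hXpos]
  calc (#(X \ S) : ℝ) ≤ ((m : ℝ) / d) ^ (k + 1) * #X := by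
        rw [div_pow, div_mul_eq_mul_div, le_div_iff₀ (pow_pos hd _), hX]
        exact_mod_cast hcount.trans_eq (mul_comm _ _)
    _ ≤ Real.exp (-((m : ℝ) / 20) * Real.log ((d : ℝ) / m)) * #X := by
        gcongr
        rw [← inv_div]
        refine Real.inv_pow_le_exp_neg_mul_log ?_ ?_
        · rw [one_le_div (by positivity)]; exact_mod_cast (by omega : m ≤ d)
        · rw [div_le_iff₀ (by norm_num)]
          exact_mod_cast (by omega : m ≤ (k + 1) * 20)
end

section
/- Let G = (V, E) be a finite directed acyclic graph with source s and sink t, where every vertex is reachable from s and reaches t. Let co(X) be the flow polytope: the set of x ∈ [0,1]^E with ∑_{e ∈ δ⁺(s)} x[e] = ∑_{e ∈ δ⁻(t)} x[e] = 1 and flow conservation ∑_{e ∈ δ⁻(v)} x[e] = ∑_{e ∈ δ⁺(v)} x[e] at every internal vertex v. For x̃ ∈ co(X), define the dilated entropy ψ(x̃) = ∑_{e ∈ E} x̃[e]·ln x̃[e] − ∑_{v ∈ V} x̃[v]·ln x̃[v], where x̃[v] := ∑_{e ∈ δ⁺(v)} x̃[e] for v ≠ t and x̃[t] := 1, with 0·ln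 0 := 0. Consider the Markovian sampling distribution D(x̃) over s-t paths, where from each vertex u the next edge e = (u,v) ∈ δ⁺(u) is chosen with probability x̃[e]/x̃[u]. Then ψ(x̃) = E_{p ∼ D(x̃)}[ln P(p)], i.e., the dilated entropy equals the negative Shannon entropy of the induced path distribution. -/
open Classical

/-- `IsWalk esrc edst u v p` : the list of edges `p` forms a walk from `u` to `v`
in the directed graph whose edges `e` go from `esrc e` to `edst e`. -/
def IsWalk {V E : Type*} (esrc edst : E → V) : V → V → List E → Prop
  | u, v, [] => u = v
  | u, v, e :: es => esrc e = u ∧ IsWalk esrc edst (edst e) v es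

/-- Mass of a vertex: `1` at the sink `t`, and the total outgoing edge mass otherwise. -/
noncomputable def vertexMass {V E : Type*} [Fintype E] (esrc : E → V) (t : V)
    (x : E → ℝ) (v : V) : ℝ :=
  if v = t then 1 else ∑ e : E, if esrc e = v then x e else 0

/-- The dilated entropy regularizer on a DAG. -/
noncomputable def dilatedEntropy {V E : Type*} [Fintype V] [Fintype E] (esrc : E → V)
    (t : V) (x : E → ℝ) : ℝ :=
  (∑ e : E, x e * Real.log (x e)) -
    ∑ v : V, vertexMass esrc t x v * Real.log (vertexMass esrc t x v)

/-- Probability of a path under the Markovian sampling procedure. -/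
noncomputable def pathProb {V E : Type*} [Fintype E] (esrc : E → V) (t : V)
    (x : E → ℝ) (p : List E) : ℝ :=
  (p.map (fun e => x e / vertexMass esrc t x (esrc e))).prod

/-!
Write `q e = x e / x[esrc e]` for the transition probabilities, so that `P(p) = ∏_{e ∈ p} q e`
and `P(p) ln P(p) = ∑_e P(p) · #_e(p) · ln q e`, where `#_e(p)` counts the occurrences of `e`
in `p`. Splitting a walk at an occurrence of `e` gives
`∑_p P(p) #_e(p) = (∑_{p : s → esrc e} P(p)) · q e · (∑_{p : edst e → t} P(p))`.
By flow conservation the first factor is the vertex mass `x[esrc e]` and the last one is `1`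
whenever `x e > 0`, so the edge marginals of `D(x)` are `x` itself, and
`E_p[ln P(p)] = ∑_e x e ln (x e / x[esrc e])`, which regroups by source vertex into `ψ(x)`.
-/

theorem List.prod_mul_log_prod (l : List ℝ) :
    l.prod * Real.log l.prod = l.prod * (l.map Real.log).sum := by
  by_cases h : (0 : ℝ) ∈ l
  · simp [List.prod_eq_zero h]
  · rw [Real.log_list_prod fun a ha h0 => h (h0 ▸ ha)]

theorem List.sum_map_eq_sum_count {ι : Type*} [Fintype ι] [DecidableEq ι] (l : List ι)
    (f : ι → ℝ) : (l.map f).sum = ∑ i, l.count i * f i := by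
  rw [Finset.sum_list_map_count l f, ← Finset.sum_subset (Finset.subset_univ l.toFinset)]
  · simp only [nsmul_eq_mul]
  · intro i _ hi
    rw [List.count_eq_zero_of_not_mem (by simpa using hi), Nat.cast_zero, zero_mul]

section Walks

variable {V E : Type*} {esrc edst : E → V} {rank : V → ℕ}

theorem isWalk_append_singleton {u v : V} {p : List E} {e : E} :
    IsWalk esrc edst u v (p ++ [e]) ↔ IsWalk esrc edst u (esrc e) p ∧ edst e = v := by
  induction p generalizing u with
  | nil => simp [IsWalk, eq_comm]
  | cons e' p ih => simp [IsWalk, ih, and_assoc]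

theorem IsWalk.rank_add_length_le (hrank : ∀ e, rank (esrc e) < rank (edst e)) {u v : V}
    {p : List E} (h : IsWalk esrc edst u v p) : rank u + p.length ≤ rank v := by
  induction p generalizing u with
  | nil => simp [h.symm]
  | cons e p ih =>
    obtain ⟨rfl, h⟩ := h
    have := ih h
    have := hrank e
    simp only [List.length_cons]
    omega

theorem induction_on_in_edges (hrank : ∀ e, rank (esrc e) < rank (edst e)) {P : V → Prop}
    (h : ∀ v, (∀ e, edst e = v → P (esrc e)) → P v) (v : V) : P v := by
  induction hv : rank v using Nat.strong_induction_on generalizing v with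
  | _ n ih => exact h v fun e he => ih _ (hv ▸ he ▸ hrank e) _ rfl

theorem induction_on_out_edges [Fintype V] (hrank : ∀ e, rank (esrc e) < rank (edst e))
    {P : V → Prop} (h : ∀ v, (∀ e, esrc e = v → P (edst e)) → P v) (v : V) : P v := by
  have hle (v : V) : rank v ≤ Finset.univ.sup rank := Finset.le_sup (Finset.mem_univ v)
  refine induction_on_in_edges (esrc := edst) (edst := esrc)
    (rank := fun v => Finset.univ.sup rank - rank v) (fun e => ?_) h v
  have := hrank e
  have := hle (edst e)
  omega

variable [Fintype E]

/-- The length bound `rank v` loses no walk into `v` once `rank` increases along edges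
(`mem_walkFinset`). -/
noncomputable def walkFinset (esrc edst : E → V) (rank : V → ℕ) (u v : V) : Finset (List E) :=
  (List.finite_length_le E (rank v)).toFinset.filter (IsWalk esrc edst u v)

theorem mem_walkFinset (hrank : ∀ e, rank (esrc e) < rank (edst e)) {u v : V} {p : List E} :
    p ∈ walkFinset esrc edst rank u v ↔ IsWalk esrc edst u v p := by
  simp only [walkFinset, Finset.mem_filter, Set.Finite.mem_toFinset, Set.mem_ofPred_eq,
    and_iff_right_iff_imp]
  intro h
  have := h.rank_add_length_le hrank
  omega

theorem walkFinset_eq_empty (hrank : ∀ e, rank (esrc e) < rank (edst e)) {u v : V}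
    (h : rank v < rank u) : walkFinset esrc edst rank u v = ∅ := by
  ext p
  simp only [mem_walkFinset hrank, Finset.notMem_empty, iff_false]
  intro hp
  have := hp.rank_add_length_le hrank
  omega

theorem walkFinset_self (hrank : ∀ e, rank (esrc e) < rank (edst e)) (u : V) :
    walkFinset esrc edst rank u u = {[]} := by
  ext p
  simp only [mem_walkFinset hrank, Finset.mem_singleton]
  refine ⟨fun h => ?_, fun h => h ▸ rfl⟩
  have := h.rank_add_length_le hrank
  exact List.eq_nil_of_length_eq_zero (by omega)

theorem sum_walkFinset_eq_add_sum_cons {M : Type*} [AddCommMonoid M]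
    (hrank : ∀ e, rank (esrc e) < rank (edst e)) (u v : V) (f : List E → M) :
    ∑ p ∈ walkFinset esrc edst rank u v, f p = (if u = v then f [] else 0) +
      ∑ e with esrc e = u, ∑ q ∈ walkFinset esrc edst rank (edst e) v, f (e :: q) := by
  by_cases huv : u = v
  · subst huv
    rw [walkFinset_self hrank, Finset.sum_singleton, if_pos rfl, Finset.sum_eq_zero, add_zero]
    intro e he
    rw [walkFinset_eq_empty hrank ((Finset.mem_filter.1 he).2 ▸ hrank e), Finset.sum_empty]
  rw [if_neg huv, zero_add, Finset.sum_sigma']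
  symm
  refine Finset.sum_bij (fun a _ => a.1 :: a.2) ?_ ?_ ?_ (fun _ _ => rfl)
  · simp [mem_walkFinset hrank, IsWalk]
  · rintro ⟨e, q⟩ - ⟨e', q'⟩ - h
    simp_all
  · intro p hp
    rw [mem_walkFinset hrank] at hp
    obtain _ | ⟨e, q⟩ := p
    · exact absurd hp huv
    · exact ⟨⟨e, q⟩, by simpa [mem_walkFinset hrank, IsWalk] using hp, rfl⟩

theorem sum_walkFinset_eq_add_sum_append {M : Type*} [AddCommMonoid M]
    (hrank : ∀ e, rank (esrc e) < rank (edst e)) (u v : V) (f : List E → M) :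
    ∑ p ∈ walkFinset esrc edst rank u v, f p = (if u = v then f [] else 0) +
      ∑ e with edst e = v, ∑ q ∈ walkFinset esrc edst rank u (esrc e), f (q ++ [e]) := by
  by_cases huv : u = v
  · subst huv
    rw [walkFinset_self hrank, Finset.sum_singleton, if_pos rfl, Finset.sum_eq_zero, add_zero]
    intro e he
    rw [walkFinset_eq_empty hrank ((Finset.mem_filter.1 he).2 ▸ hrank e), Finset.sum_empty]
  rw [if_neg huv, zero_add, Finset.sum_sigma']
  symm
  refine Finset.sum_bij (fun a _ => a.2 ++ [a.1]) ?_ ?_ ?_ (fun _ _ => rfl)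
  · simp +contextual [mem_walkFinset hrank, isWalk_append_singleton]
  · rintro ⟨e, q⟩ - ⟨e', q'⟩ - h
    simp_all
  · intro p hp
    rw [mem_walkFinset hrank] at hp
    obtain rfl | ⟨q, e, rfl⟩ := List.eq_nil_or_concat' p
    · exact absurd hp huv
    · refine ⟨⟨e, q⟩, ?_, rfl⟩
      simpa [mem_walkFinset hrank, isWalk_append_singleton, and_comm] using hp

theorem sum_walkFinset_prod_mul_count [Fintype V] (hrank : ∀ e, rank (esrc e) < rank (edst e))
    (w : E → ℝ) (e : E) (u v : V) :
    ∑ p ∈ walkFinset esrc edst rank u v, (p.map w).prod * p.count e =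
      (∑ p ∈ walkFinset esrc edst rank u (esrc e), (p.map w).prod) * w e *
        ∑ p ∈ walkFinset esrc edst rank (edst e) v, (p.map w).prod := by
  induction u using induction_on_out_edges hrank with
  | h u ih =>
    have first_edge (e' : E) (he' : esrc e' = u) :
        ∑ q ∈ walkFinset esrc edst rank (edst e') v,
            ((e' :: q).map w).prod * (e' :: q).count e =
          w e' * (∑ q ∈ walkFinset esrc edst rank (edst e') (esrc e), (q.map w).prod) * w e *
              ∑ p ∈ walkFinset esrc edst rank (edst e) v, (p.map w).prod +
            if e' = e then w e * ∑ p ∈ walkFinset esrc edst rank (edst e) v, (p.map w).prod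
            else 0 := by
      simp only [List.map_cons, List.prod_cons, List.count_cons, beq_iff_eq, Nat.cast_add,
        Nat.cast_ite, Nat.cast_one, Nat.cast_zero, mul_add, Finset.sum_add_distrib, mul_assoc,
        ← Finset.mul_sum, ih e' he']
      split_ifs with h <;> simp [h]
    rw [sum_walkFinset_eq_add_sum_cons hrank u v,
      sum_walkFinset_eq_add_sum_cons hrank u (esrc e),
      Finset.sum_congr rfl fun e' he' => first_edge e' (Finset.mem_filter.1 he').2,
      Finset.sum_add_distrib, Finset.sum_ite_eq', ← Finset.sum_mul, ← Finset.sum_mul]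
    simp only [List.map_nil, List.prod_nil, List.count_nil, Nat.cast_zero, mul_zero, ite_self,
      zero_add, List.map_cons, List.prod_cons, ← Finset.mul_sum, Finset.mem_filter,
      Finset.mem_univ, true_and, eq_comm (a := u)]
    split_ifs <;> ring

end Walks

section Flows

variable {V E : Type*} [Fintype E] {esrc edst : E → V} {s t : V} {x : E → ℝ}

structure IsUnitFlow (esrc edst : E → V) (s t : V) (x : E → ℝ) : Prop where
  nonneg : ∀ e, 0 ≤ x e
  out_source : (∑ e, if esrc e = s then x e else 0) = 1
  in_sink : (∑ e, if edst e = t then x e else 0) = 1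
  conservation : ∀ v, v ≠ s → v ≠ t →
    (∑ e, if edst e = v then x e else 0) = ∑ e, if esrc e = v then x e else 0

noncomputable def transitionProb (esrc : E → V) (t : V) (x : E → ℝ) (e : E) : ℝ :=
  x e / vertexMass esrc t x (esrc e)

theorem pathProb_eq_prod_map_transitionProb (p : List E) :
    pathProb esrc t x p = (p.map (transitionProb esrc t x)).prod := rfl

theorem pathProb_nil : pathProb esrc t x [] = 1 := List.prod_nil

theorem pathProb_cons (e : E) (p : List E) :
    pathProb esrc t x (e :: p) = transitionProb esrc t x e * pathProb esrc t x p :=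
  List.prod_cons

theorem pathProb_append_singleton (p : List E) (e : E) :
    pathProb esrc t x (p ++ [e]) = pathProb esrc t x p * transitionProb esrc t x e := by
  simp [pathProb_eq_prod_map_transitionProb]

theorem pathProb_mul_log_pathProb (p : List E) :
    pathProb esrc t x p * Real.log (pathProb esrc t x p) =
      ∑ e, pathProb esrc t x p * p.count e * Real.log (transitionProb esrc t x e) := by
  rw [pathProb_eq_prod_map_transitionProb, List.prod_mul_log_prod, List.map_map,
    List.sum_map_eq_sum_count, Finset.mul_sum]
  simp only [Function.comp_apply, mul_assoc]

theorem vertexMass_self : vertexMass esrc t x t = 1 := if_pos rfl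

theorem vertexMass_of_ne {v : V} (hv : v ≠ t) :
    vertexMass esrc t x v = ∑ e, if esrc e = v then x e else 0 := if_neg hv

theorem le_sum_ite_eq (hx : ∀ e, 0 ≤ x e) (f : E → V) (e : E) :
    x e ≤ ∑ e', if f e' = f e then x e' else 0 := by
  simpa using Finset.single_le_sum (f := fun e' => if f e' = f e then x e' else 0)
    (fun e' _ => by split_ifs <;> simp [hx e']) (Finset.mem_univ e)

theorem eq_zero_of_vertexMass_eq_zero (hx : ∀ e, 0 ≤ x e) {e : E}
    (he : vertexMass esrc t x (esrc e) = 0) : x e = 0 := by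
  have hne : esrc e ≠ t := fun h => by simp [h, vertexMass_self] at he
  rw [vertexMass_of_ne hne] at he
  exact le_antisymm (he ▸ le_sum_ite_eq hx esrc e) (hx e)

theorem vertexMass_mul_transitionProb (hx : ∀ e, 0 ≤ x e) (e : E) :
    vertexMass esrc t x (esrc e) * transitionProb esrc t x e = x e := by
  by_cases he : vertexMass esrc t x (esrc e) = 0
  · rw [he, zero_mul, eq_zero_of_vertexMass_eq_zero hx he]
  · exact mul_div_cancel₀ _ he

theorem sum_mul_log_vertexMass_esrc [Fintype V] :
    ∑ e, x e * Real.log (vertexMass esrc t x (esrc e)) =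
      ∑ v, vertexMass esrc t x v * Real.log (vertexMass esrc t x v) := by
  rw [← Finset.sum_fiberwise Finset.univ esrc]
  refine Finset.sum_congr rfl fun v _ => ?_
  rw [Finset.sum_congr rfl fun e he => by rw [(Finset.mem_filter.1 he).2], ← Finset.sum_mul]
  by_cases hv : v = t
  · simp [hv, vertexMass_self]
  · rw [vertexMass_of_ne hv, Finset.sum_filter]

theorem dilatedEntropy_eq_sum_mul_log_transitionProb [Fintype V] (hx : ∀ e, 0 ≤ x e) :
    dilatedEntropy esrc t x = ∑ e, x e * Real.log (transitionProb esrc t x e) := by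
  have h (e : E) : x e * Real.log (transitionProb esrc t x e) =
      x e * Real.log (x e) - x e * Real.log (vertexMass esrc t x (esrc e)) := by
    by_cases hxe : x e = 0
    · simp [hxe]
    · have hm : vertexMass esrc t x (esrc e) ≠ 0 := mt (eq_zero_of_vertexMass_eq_zero hx) hxe
      rw [transitionProb, Real.log_div hxe hm, mul_sub]
  rw [dilatedEntropy, Finset.sum_congr rfl fun e _ => h e, Finset.sum_sub_distrib,
    sum_mul_log_vertexMass_esrc]

theorem IsUnitFlow.vertexMass_source (hx : IsUnitFlow esrc edst s t x) :
    vertexMass esrc t x s = 1 := by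
  by_cases hs : s = t
  · exact hs ▸ vertexMass_self
  · rw [vertexMass_of_ne hs, hx.out_source]

theorem IsUnitFlow.vertexMass_edst_pos (hx : IsUnitFlow esrc edst s t x) {e : E}
    (he : 0 < x e) : 0 < vertexMass esrc t x (edst e) := by
  by_cases hs : edst e = s
  · simp [hs, hx.vertexMass_source]
  by_cases ht : edst e = t
  · simp [ht, vertexMass_self]
  rw [vertexMass_of_ne ht, ← hx.conservation _ hs ht]
  exact he.trans_le (le_sum_ite_eq hx.nonneg edst e)

variable {rank : V → ℕ}

theorem IsUnitFlow.sum_walkFinset_source_pathProb (hx : IsUnitFlow esrc edst s t x)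
    (hrank : ∀ e, rank (esrc e) < rank (edst e)) (v : V) :
    ∑ p ∈ walkFinset esrc edst rank s v, pathProb esrc t x p = vertexMass esrc t x v := by
  induction v using induction_on_in_edges hrank with
  | h v ih =>
    by_cases hvs : v = s
    · rw [hvs, walkFinset_self hrank, Finset.sum_singleton, pathProb_nil, hx.vertexMass_source]
    have last_edge (e : E) (he : edst e = v) :
        ∑ q ∈ walkFinset esrc edst rank s (esrc e), pathProb esrc t x (q ++ [e]) = x e := by
      simp only [pathProb_append_singleton, ← Finset.sum_mul, ih e he,
        vertexMass_mul_transitionProb hx.nonneg]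
    rw [sum_walkFinset_eq_add_sum_append hrank, if_neg (Ne.symm hvs), zero_add,
      Finset.sum_congr rfl fun e he => last_edge e (Finset.mem_filter.1 he).2, Finset.sum_filter]
    by_cases hvt : v = t
    · rw [hvt, hx.in_sink, vertexMass_self]
    · rw [hx.conservation v hvs hvt, vertexMass_of_ne hvt]

variable [Fintype V]

theorem IsUnitFlow.sum_walkFinset_pathProb_sink (hx : IsUnitFlow esrc edst s t x)
    (hrank : ∀ e, rank (esrc e) < rank (edst e)) {v : V} (hv : 0 < vertexMass esrc t x v) :
    ∑ p ∈ walkFinset esrc edst rank v t, pathProb esrc t x p = 1 := by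
  induction v using induction_on_out_edges hrank with
  | h v ih =>
    by_cases hvt : v = t
    · rw [hvt, walkFinset_self hrank, Finset.sum_singleton, pathProb_nil]
    have first_edge (e : E) (he : esrc e = v) :
        ∑ q ∈ walkFinset esrc edst rank (edst e) t, pathProb esrc t x (e :: q) =
          x e / vertexMass esrc t x v := by
      simp only [pathProb_cons, ← Finset.mul_sum]
      rcases (hx.nonneg e).eq_or_lt with h0 | hpos
      · simp [transitionProb, ← h0]
      · rw [ih e he (hx.vertexMass_edst_pos hpos), mul_one, transitionProb, he]
    rw [sum_walkFinset_eq_add_sum_cons hrank, if_neg hvt, zero_add,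
      Finset.sum_congr rfl fun e he => first_edge e (Finset.mem_filter.1 he).2, ← Finset.sum_div,
      Finset.sum_filter, ← vertexMass_of_ne hvt, div_self hv.ne']

theorem IsUnitFlow.sum_walkFinset_pathProb_mul_count (hx : IsUnitFlow esrc edst s t x)
    (hrank : ∀ e, rank (esrc e) < rank (edst e)) (e : E) :
    ∑ p ∈ walkFinset esrc edst rank s t, pathProb esrc t x p * p.count e = x e := by
  have h := sum_walkFinset_prod_mul_count hrank (transitionProb esrc t x) e s t
  simp only [← pathProb_eq_prod_map_transitionProb] at h
  rw [h, hx.sum_walkFinset_source_pathProb hrank, vertexMass_mul_transitionProb hx.nonneg]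
  rcases (hx.nonneg e).eq_or_lt with h0 | hpos
  · rw [← h0, zero_mul]
  · rw [hx.sum_walkFinset_pathProb_sink hrank (hx.vertexMass_edst_pos hpos), mul_one]

end Flows

theorem dilated_entropy_eq_neg_shannon_general {V E : Type*} [Fintype V] [Fintype E]
    (esrc edst : E → V) (s t : V)
    (rank : V → ℕ) (hrank : ∀ e, rank (esrc e) < rank (edst e))
    (X : Finset (List E)) (hX : ∀ p, p ∈ X ↔ IsWalk esrc edst s t p)
    (x : E → ℝ) (hx0 : ∀ e, 0 ≤ x e)
    (hsrc : (∑ e : E, if esrc e = s then x e else 0) = 1)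
    (hsink : (∑ e : E, if edst e = t then x e else 0) = 1)
    (hcons : ∀ v, v ≠ s → v ≠ t →
      (∑ e : E, if edst e = v then x e else 0) = (∑ e : E, if esrc e = v then x e else 0)) :
    dilatedEntropy esrc t x
      = ∑ p ∈ X, pathProb esrc t x p * Real.log (pathProb esrc t x p) := by
  have hXwalks : X = walkFinset esrc edst rank s t :=
    Finset.ext fun p => (hX p).trans (mem_walkFinset hrank).symm
  have hx : IsUnitFlow esrc edst s t x := ⟨hx0, hsrc, hsink, hcons⟩
  calc dilatedEntropy esrc t x = ∑ e, x e * Real.log (transitionProb esrc t x e) :=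
        dilatedEntropy_eq_sum_mul_log_transitionProb hx0
    _ = ∑ e, ∑ p ∈ X,
          pathProb esrc t x p * p.count e * Real.log (transitionProb esrc t x e) := by
        simp only [← Finset.sum_mul, hXwalks, hx.sum_walkFinset_pathProb_mul_count hrank]
    _ = ∑ p ∈ X, pathProb esrc t x p * Real.log (pathProb esrc t x p) := by
        rw [Finset.sum_comm]
        simp only [pathProb_mul_log_pathProb]

theorem dilated_entropy_eq_neg_shannon {V E : Type*} [Fintype V] [Fintype E]
    (esrc edst : E → V) (s t : V)
    (rank : V → ℕ) (hrank : ∀ e, rank (esrc e) < rank (edst e)) (hst : s ≠ t)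
    (X : Finset (List E)) (hX : ∀ p, p ∈ X ↔ IsWalk esrc edst s t p)
    (x : E → ℝ) (hx0 : ∀ e, 0 ≤ x e) (hx1 : ∀ e, x e ≤ 1)
    (hsrc : (∑ e : E, if esrc e = s then x e else 0) = 1)
    (hsink : (∑ e : E, if edst e = t then x e else 0) = 1)
    (hcons : ∀ v, v ≠ s → v ≠ t →
      (∑ e : E, if edst e = v then x e else 0) = (∑ e : E, if esrc e = v then x e else 0)) :
    dilatedEntropy esrc t x
      = ∑ p ∈ X, pathProb esrc t x p * Real.log (pathProb esrc t x p) :=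
  dilated_entropy_eq_neg_shannon_general esrc edst s t rank hrank X hX x hx0 hsrc hsink hcons
end

section
/- Let G = (V, E) be a finite DAG with source s and sink t such that every vertex lies on some s-t path, and let X be the set of s-t paths (as 0/1 vectors indexed by E), assumed to contain at least two paths. The dilated entropy ψ is differentiable and strictly convex on the relative interior C of the flow polytope co(X); moreover, for any sequence {x_n} in C converging to a boundary point of co(X), the gradient norms ‖∇ψ(x_n)‖₂ tend to infinity. -/
open Classical Filter

/-- The dilated entropy regularizer on a DAG, as a function on Euclidean space
(indexed by edges). -/
noncomputable def dilEnt {V E : Type*} [Fintype V] [Fintype E] (esrc : E → V) (t : V)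
    (x : EuclideanSpace ℝ E) : ℝ :=
  (∑ e : E, x e * Real.log (x e)) -
    ∑ v : V, (if v = t then 1 else ∑ e : E, if esrc e = v then x e else 0) *
      Real.log (if v = t then 1 else ∑ e : E, if esrc e = v then x e else 0)

/-- The flow polytope of a DAG with source `s` and sink `t`. -/
def flowPoly {V E : Type*} [Fintype V] [Fintype E] (esrc edst : E → V) (s t : V) :
    Set (EuclideanSpace ℝ E) :=
  {x | (∀ e, 0 ≤ x e ∧ x e ≤ 1) ∧
    (∑ e : E, if esrc e = s then x e else 0) = 1 ∧
    (∑ e : E, if edst e = t then x e else 0) = 1 ∧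
    ∀ v, v ≠ s → v ≠ t →
      (∑ e : E, if edst e = v then x e else 0) = (∑ e : E, if esrc e = v then x e else 0)}

/-! The intrinsic interior of the flow polytope consists of its strictly positive points: every
edge lies on an `s`-`t` path, whose incidence vector is a point of the polytope, and an edge on
which `x` vanishes would become negative when moving from `x` away from that vector.

On positive flows the dilated entropy is `∑ₑ x[u] φ(x[e] / x[u])`, where `u` is the tail of `e`
and `φ r = r log r`: a sum of perspectives of a strictly convex function, hence convex. It is
strictly convex because two distinct unit flows on a DAG differ in some local ratio
`x[e] / x[u]` (induction along the rank). Its partial derivatives are `log x[e] - log x[u]`; at a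
boundary point, following a path into a vanishing edge gives an edge with `x[e] = 0` but
`x[u] > 0`, and along this edge the partial derivative tends to `-∞`. -/

open Real Topology

theorem LinearMap.eq_of_mem_affineSpan {k M N : Type*} [Ring k] [AddCommGroup M] [Module k M]
    [AddCommGroup N] [Module k N] (L : M →ₗ[k] N) {s : Set M} {c : N}
    (h : ∀ x ∈ s, L x = c) {z : M} (hz : z ∈ affineSpan k s) : L z = c :=
  affineSpan_induction (p := fun z => L z = c) hz h fun a u v w hu hv hw => by
    simp [hu, hv, hw]

theorem mem_intrinsicInterior_of_isOpen {F : Type*} [AddCommGroup F] [Module ℝ F]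
    [TopologicalSpace F] {s U : Set F} {x : F} (hU : IsOpen U) (hxU : x ∈ U) (hx : x ∈ s)
    (hUs : U ∩ affineSpan ℝ s ⊆ s) : x ∈ intrinsicInterior ℝ s :=
  ⟨⟨x, subset_affineSpan ℝ s hx⟩,
    mem_interior.2 ⟨_, fun z hz => hUs ⟨hz, z.2⟩, hU.preimage continuous_subtype_val, hxU⟩, rfl⟩

theorem exists_pos_smul_sub_add_mem_of_mem_intrinsicInterior {F : Type*} [AddCommGroup F]
    [Module ℝ F] [TopologicalSpace F] [IsTopologicalAddGroup F] [ContinuousSMul ℝ F]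
    {s : Set F} {x y : F} (hx : x ∈ intrinsicInterior ℝ s) (hy : y ∈ s) :
    ∃ δ : ℝ, 0 < δ ∧ δ • (x - y) + x ∈ s := by
  obtain ⟨z, hz, rfl⟩ := hx
  let γ : ℝ → affineSpan ℝ s := fun δ =>
    ⟨δ • ((z : F) - y) + z,
      AffineSubspace.smul_vsub_vadd_mem _ δ z.2 (subset_affineSpan ℝ s hy) z.2⟩
  have hγ0 : γ 0 = z := by ext; simp [γ]
  have hnhds : γ ⁻¹' interior (Subtype.val ⁻¹' s) ∈ 𝓝 0 :=
    (by fun_prop : Continuous γ).continuousAt.preimage_mem_nhds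
      (hγ0 ▸ isOpen_interior.mem_nhds hz)
  obtain ⟨δ, hδs, hδ⟩ :=
    ((Filter.Eventually.filter_mono nhdsWithin_le_nhds hnhds).and
      (self_mem_nhdsWithin (s := Set.Ioi (0 : ℝ)))).exists
  exact ⟨δ, hδ, (interior_subset hδs : γ δ ∈ Subtype.val ⁻¹' s)⟩

theorem ConvexOn.perspective_le {s : Set ℝ} {f : ℝ → ℝ} (hf : ConvexOn ℝ s f)
    {a b A₁ A₂ B₁ B₂ : ℝ} (ha : 0 < a) (hb : 0 < b) (hB₁ : 0 < B₁) (hB₂ : 0 < B₂)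
    (h₁ : A₁ / B₁ ∈ s) (h₂ : A₂ / B₂ ∈ s) :
    (a * B₁ + b * B₂) * f ((a * A₁ + b * A₂) / (a * B₁ + b * B₂)) ≤
      a * (B₁ * f (A₁ / B₁)) + b * (B₂ * f (A₂ / B₂)) := by
  have hB : 0 < a * B₁ + b * B₂ := by positivity
  set w₁ := a * B₁ / (a * B₁ + b * B₂)
  set w₂ := b * B₂ / (a * B₁ + b * B₂)
  have key := hf.2 h₁ h₂ (by positivity : 0 ≤ w₁) (by positivity : 0 ≤ w₂)
    (by simp only [w₁, w₂]; field_simp)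
  have hmid : w₁ * (A₁ / B₁) + w₂ * (A₂ / B₂) = (a * A₁ + b * A₂) / (a * B₁ + b * B₂) := by
    simp only [w₁, w₂]; field_simp
  simp only [smul_eq_mul, hmid] at key
  calc _ ≤ (a * B₁ + b * B₂) * (w₁ * f (A₁ / B₁) + w₂ * f (A₂ / B₂)) :=
        mul_le_mul_of_nonneg_left key hB.le
    _ = _ := by simp only [w₁, w₂]; field_simp

theorem StrictConvexOn.perspective_lt {s : Set ℝ} {f : ℝ → ℝ} (hf : StrictConvexOn ℝ s f)
    {a b A₁ A₂ B₁ B₂ : ℝ} (ha : 0 < a) (hb : 0 < b) (hB₁ : 0 < B₁)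
    (hB₂ : 0 < B₂) (h₁ : A₁ / B₁ ∈ s) (h₂ : A₂ / B₂ ∈ s) (hne : A₁ / B₁ ≠ A₂ / B₂) :
    (a * B₁ + b * B₂) * f ((a * A₁ + b * A₂) / (a * B₁ + b * B₂)) <
      a * (B₁ * f (A₁ / B₁)) + b * (B₂ * f (A₂ / B₂)) := by
  have hB : 0 < a * B₁ + b * B₂ := by positivity
  set w₁ := a * B₁ / (a * B₁ + b * B₂)
  set w₂ := b * B₂ / (a * B₁ + b * B₂)
  have key := hf.2 h₁ h₂ hne (by positivity : 0 < w₁) (by positivity : 0 < w₂)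
    (by simp only [w₁, w₂]; field_simp)
  have hmid : w₁ * (A₁ / B₁) + w₂ * (A₂ / B₂) = (a * A₁ + b * A₂) / (a * B₁ + b * B₂) := by
    simp only [w₁, w₂]; field_simp
  simp only [smul_eq_mul, hmid] at key
  calc _ < (a * B₁ + b * B₂) * (w₁ * f (A₁ / B₁) + w₂ * f (A₂ / B₂)) :=
        mul_lt_mul_of_pos_left key hB
    _ = _ := by simp only [w₁, w₂]; field_simp

theorem HasFDerivAt.gradient_apply {ι : Type*} [Fintype ι] [DecidableEq ι]
    {f : EuclideanSpace ℝ ι → ℝ} {D : EuclideanSpace ℝ ι →L[ℝ] ℝ} {x : EuclideanSpace ℝ ι}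
    (h : HasFDerivAt f D x) (i : ι) : gradient f x i = D (EuclideanSpace.single i 1) := by
  rw [(hasFDerivAt_iff_hasGradientAt.1 h).gradient, ← InnerProductSpace.toDual_symm_apply,
    EuclideanSpace.inner_single_right]
  simp

theorem hasFDerivAt_mul_log_comp {F : Type*} [NormedAddCommGroup F] [NormedSpace ℝ F]
    (L : F →L[ℝ] ℝ) {x : F} (hx : L x ≠ 0) :
    HasFDerivAt (fun y => L y * log (L y)) ((log (L x) + 1) • L) x :=
  (Real.hasDerivAt_mul_log hx).comp_hasFDerivAt x L.hasFDerivAt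

section Walks

variable {V E : Type*} {esrc edst : E → V} {s t : V} {rank : V → ℕ}

theorem IsWalk.append {u v w : V} {p q : List E} (hp : IsWalk esrc edst u v p)
    (hq : IsWalk esrc edst v w q) : IsWalk esrc edst u w (p ++ q) := by
  induction p generalizing u with
  | nil => cases hp; exact hq
  | cons e es ih => exact ⟨hp.1, ih hp.2⟩

theorem IsWalk.rank_le (hrank : ∀ e, rank (esrc e) < rank (edst e)) {u v : V} {p : List E}
    (hp : IsWalk esrc edst u v p) : rank u ≤ rank v := by
  induction p generalizing u with
  | nil => cases hp; rfl
  | cons e es ih => exact hp.1 ▸ (hrank e).le.trans (ih hp.2)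

theorem exists_isWalk_mem (hcover : ∀ v, ∃ p q, IsWalk esrc edst s v p ∧ IsWalk esrc edst v t q)
    (e : E) : ∃ w, IsWalk esrc edst s t w ∧ e ∈ w := by
  obtain ⟨p, -, hp, -⟩ := hcover (esrc e)
  obtain ⟨-, q, -, hq⟩ := hcover (edst e)
  exact ⟨p ++ e :: q, hp.append ⟨rfl, hq⟩, by simp⟩

theorem exists_esrc_eq (hcover : ∀ v, ∃ p q, IsWalk esrc edst s v p ∧ IsWalk esrc edst v t q)
    {v : V} (hv : v ≠ t) : ∃ e, esrc e = v := by
  obtain ⟨-, _ | ⟨e, _⟩, -, hq⟩ := hcover v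
  · exact absurd hq hv
  · exact ⟨e, hq.1⟩

theorem edst_ne_source (hrank : ∀ e, rank (esrc e) < rank (edst e))
    (hcover : ∀ v, ∃ p q, IsWalk esrc edst s v p ∧ IsWalk esrc edst v t q) (e : E) :
    edst e ≠ s := fun h => by
  obtain ⟨p, -, hp, -⟩ := hcover (esrc e)
  exact (hp.rank_le hrank).not_gt (h ▸ hrank e)

theorem esrc_ne_sink (hrank : ∀ e, rank (esrc e) < rank (edst e))
    (hcover : ∀ v, ∃ p q, IsWalk esrc edst s v p ∧ IsWalk esrc edst v t q) (e : E) :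
    esrc e ≠ t := fun h => by
  obtain ⟨-, q, -, hq⟩ := hcover (edst e)
  exact (hq.rank_le hrank).not_gt (h ▸ hrank e)

end Walks

section Flows

variable {V E : Type*} {esrc edst : E → V} {s t : V} {rank : V → ℕ}

noncomputable def walkVector (p : List E) : EuclideanSpace ℝ E :=
  (p.map fun e => EuclideanSpace.single e 1).sum

theorem walkVector_apply (p : List E) (e : E) : walkVector p e = p.count e := by
  induction p with
  | nil => simp [walkVector]
  | cons e' es ih =>
    simp only [walkVector, List.map_cons, List.sum_cons] at ih ⊢
    rw [PiLp.add_apply, ih, PiLp.single_apply, List.count_cons]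
    by_cases h : e = e' <;> simp [h, Ne.symm, add_comm]

variable [Fintype E]

/-- With `f = esrc` this is the outflow `x[v]` of the paper, with `f = edst` the inflow. -/
noncomputable def incidentSum (f : E → V) (v : V) : EuclideanSpace ℝ E →L[ℝ] ℝ :=
  ∑ e, if f e = v then EuclideanSpace.proj e else 0

@[simp]
theorem incidentSum_apply (f : E → V) (v : V) (x : EuclideanSpace ℝ E) :
    incidentSum f v x = ∑ e, if f e = v then x e else 0 := by
  simp only [incidentSum, sum_apply]
  refine Finset.sum_congr rfl fun e _ => ?_
  split_ifs <;> rfl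

theorem incidentSum_single (f : E → V) (v : V) (e : E) :
    incidentSum f v (EuclideanSpace.single e 1) = if f e = v then 1 else 0 := by
  rw [incidentSum_apply, Finset.sum_eq_single e (fun e' _ he' => by simp [he'])
    (by simp)]
  simp

theorem le_incidentSum (f : E → V) {x : EuclideanSpace ℝ E} (hx : ∀ e, 0 ≤ x e) (e : E) :
    x e ≤ incidentSum f (f e) x := by
  rw [incidentSum_apply]
  calc x e = if f e = f e then x e else 0 := (if_pos rfl).symm
    _ ≤ _ := Finset.single_le_sum (f := fun e' => if f e' = f e then x e' else 0)
      (fun e' _ => by split_ifs <;> simp [hx e']) (Finset.mem_univ e)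

theorem incidentSum_pos (f : E → V) {x : EuclideanSpace ℝ E} (hx : ∀ e, 0 < x e) (e : E) :
    0 < incidentSum f (f e) x :=
  (hx e).trans_le (le_incidentSum f (fun e => (hx e).le) e)

theorem sum_incidentSum (f : E → V) (S : Finset V) (x : EuclideanSpace ℝ E) :
    ∑ v ∈ S, incidentSum f v x = ∑ e with f e ∈ S, x e := by
  simp only [incidentSum_apply, Finset.sum_filter]
  rw [Finset.sum_comm]
  simp [eq_comm]

theorem IsWalk.incidentSum_walkVector {u w : V} {p : List E} (hp : IsWalk esrc edst u w p)
    (v : V) : incidentSum esrc v (walkVector p) - incidentSum edst v (walkVector p) =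
      (if u = v then 1 else 0) - (if w = v then 1 else 0) := by
  induction p generalizing u with
  | nil => cases hp; simp [walkVector]
  | cons e es ih =>
    obtain ⟨rfl, hes⟩ := hp
    have := ih hes
    simp only [walkVector, List.map_cons, List.sum_cons, map_add, incidentSum_single] at this ⊢
    linarith

def IsUnitFlow_s13 (esrc edst : E → V) (s t : V) (x : EuclideanSpace ℝ E) : Prop :=
  incidentSum esrc s x = 1 ∧ incidentSum edst t x = 1 ∧
    ∀ v, v ≠ s → v ≠ t → incidentSum edst v x = incidentSum esrc v x

theorem mem_flowPoly_iff [Fintype V] {x : EuclideanSpace ℝ E} :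
    x ∈ flowPoly esrc edst s t ↔ (∀ e, 0 ≤ x e ∧ x e ≤ 1) ∧ IsUnitFlow_s13 esrc edst s t x := by
  simp only [IsUnitFlow_s13, incidentSum_apply]; rfl

theorem IsUnitFlow_s13.sum_cut {x : EuclideanSpace ℝ E} (hx : IsUnitFlow_s13 esrc edst s t x)
    (hnes : ∀ e, edst e ≠ s) {S : Finset V} (hs : s ∈ S) (ht : t ∉ S) :
    ∑ e with esrc e ∈ S, x e - ∑ e with edst e ∈ S, x e = 1 := by
  rw [← sum_incidentSum, ← sum_incidentSum, ← Finset.sum_sub_distrib,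
    Finset.sum_eq_single_of_mem s hs fun v hv hvs => ?_]
  · simp [hx.1, hnes]
  · rw [hx.2.2 v hvs (ne_of_mem_of_not_mem hv ht), sub_self]

/-- The edge `e` crosses the cut `{v | rank v ≤ rank (esrc e)}`, which carries one unit of flow. -/
theorem IsUnitFlow_s13.le_one [Fintype V] (hrank : ∀ e, rank (esrc e) < rank (edst e))
    (hcover : ∀ v, ∃ p q, IsWalk esrc edst s v p ∧ IsWalk esrc edst v t q)
    {x : EuclideanSpace ℝ E} (hx : IsUnitFlow_s13 esrc edst s t x) (h0 : ∀ e, 0 ≤ x e) (e : E) :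
    x e ≤ 1 := by
  let S : Finset V := {v | rank v ≤ rank (esrc e)}
  have hs : s ∈ S := by
    obtain ⟨p, -, hp, -⟩ := hcover (esrc e)
    simpa [S] using hp.rank_le hrank
  have ht : t ∉ S := by
    obtain ⟨-, q, -, hq⟩ := hcover (edst e)
    simpa [S] using (hrank e).trans_le (hq.rank_le hrank)
  have hsub : Finset.univ.filter (edst · ∈ S) ⊆ Finset.univ.filter (esrc · ∈ S) := by
    intro e' he'
    simp only [S, Finset.mem_filter, Finset.mem_univ, true_and] at he' ⊢
    exact (hrank e').le.trans he'
  have he : e ∈ Finset.univ.filter (esrc · ∈ S) \ Finset.univ.filter (edst · ∈ S) := by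
    simp [S, hrank e]
  rw [← hx.sum_cut (edst_ne_source hrank hcover) hs ht, ← Finset.sum_sdiff_eq_sub hsub]
  exact Finset.single_le_sum (fun e' _ => h0 e') he

theorem IsUnitFlow_s13.ne (hnes : ∀ e, edst e ≠ s) {x : EuclideanSpace ℝ E}
    (hx : IsUnitFlow_s13 esrc edst s t x) : s ≠ t := by
  rintro rfl
  simpa [hnes] using hx.2.1

theorem IsWalk.isUnitFlow_walkVector (hnes : ∀ e, edst e ≠ s) (hnet : ∀ e, esrc e ≠ t)
    (hst : s ≠ t) {p : List E} (hp : IsWalk esrc edst s t p) :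
    IsUnitFlow_s13 esrc edst s t (walkVector p) := by
  have hin : incidentSum edst s (walkVector p) = 0 := by simp [hnes]
  have hout : incidentSum esrc t (walkVector p) = 0 := by simp [hnet]
  have hs := hp.incidentSum_walkVector s
  have ht := hp.incidentSum_walkVector t
  simp only [hst, hst.symm, if_true, if_false] at hs ht
  refine ⟨by linarith, by linarith, fun v hvs hvt => ?_⟩
  have hv := hp.incidentSum_walkVector v
  simp only [Ne.symm hvs, Ne.symm hvt, if_false] at hv
  linarith

theorem IsWalk.walkVector_mem_flowPoly [Fintype V] (hrank : ∀ e, rank (esrc e) < rank (edst e))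
    (hcover : ∀ v, ∃ p q, IsWalk esrc edst s v p ∧ IsWalk esrc edst v t q) (hst : s ≠ t)
    {p : List E} (hp : IsWalk esrc edst s t p) : walkVector p ∈ flowPoly esrc edst s t := by
  have hflow := hp.isUnitFlow_walkVector (edst_ne_source hrank hcover)
    (esrc_ne_sink hrank hcover) hst
  have h0 : ∀ e, 0 ≤ walkVector p e := fun e => by simp [walkVector_apply]
  exact mem_flowPoly_iff.2 ⟨fun e => ⟨h0 e, hflow.le_one hrank hcover h0 e⟩, hflow⟩

theorem IsUnitFlow_s13.of_mem_affineSpan {A : Set (EuclideanSpace ℝ E)}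
    (hA : ∀ x ∈ A, IsUnitFlow_s13 esrc edst s t x) {z : EuclideanSpace ℝ E}
    (hz : z ∈ affineSpan ℝ A) : IsUnitFlow_s13 esrc edst s t z := by
  refine ⟨(incidentSum esrc s).toLinearMap.eq_of_mem_affineSpan (fun x hx => (hA x hx).1) hz,
    (incidentSum edst t).toLinearMap.eq_of_mem_affineSpan (fun x hx => (hA x hx).2.1) hz,
    fun v hvs hvt => sub_eq_zero.1 ?_⟩
  exact (incidentSum edst v - incidentSum esrc v).toLinearMap.eq_of_mem_affineSpan
    (fun x hx => sub_eq_zero.2 ((hA x hx).2.2 v hvs hvt)) hz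

theorem pos_inter_affineSpan_flowPoly_subset [Fintype V]
    (hrank : ∀ e, rank (esrc e) < rank (edst e))
    (hcover : ∀ v, ∃ p q, IsWalk esrc edst s v p ∧ IsWalk esrc edst v t q) :
    {x | ∀ e, 0 < x e} ∩ affineSpan ℝ (flowPoly esrc edst s t) ⊆ flowPoly esrc edst s t := by
  rintro x ⟨hpos, hspan⟩
  have hflow := IsUnitFlow_s13.of_mem_affineSpan (fun y hy => (mem_flowPoly_iff.1 hy).2) hspan
  exact mem_flowPoly_iff.2
    ⟨fun e => ⟨(hpos e).le, hflow.le_one hrank hcover (fun e => (hpos e).le) e⟩, hflow⟩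

theorem intrinsicInterior_flowPoly [Fintype V] (hrank : ∀ e, rank (esrc e) < rank (edst e))
    (hcover : ∀ v, ∃ p q, IsWalk esrc edst s v p ∧ IsWalk esrc edst v t q) :
    intrinsicInterior ℝ (flowPoly esrc edst s t) =
      {x | ∀ e, 0 < x e} ∩ affineSpan ℝ (flowPoly esrc edst s t) := by
  have hopen : IsOpen {x : EuclideanSpace ℝ E | ∀ e, 0 < x e} := by
    simp only [Set.ofPred_forall]
    exact isOpen_iInter_of_finite fun e => isOpen_lt continuous_const (by fun_prop)
  ext x
  refine ⟨fun hx => ⟨fun e => ?_, subset_affineSpan ℝ _ (intrinsicInterior_subset hx)⟩,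
    fun hx => mem_intrinsicInterior_of_isOpen hopen hx.1
      (pos_inter_affineSpan_flowPoly_subset hrank hcover hx)
      (pos_inter_affineSpan_flowPoly_subset hrank hcover)⟩
  have hxP := mem_flowPoly_iff.1 (intrinsicInterior_subset hx)
  refine ((hxP.1 e).1).lt_of_ne' fun hxe => ?_
  -- moving from `x` away from a path through `e` makes the `e`-coordinate negative
  obtain ⟨w, hw, hew⟩ := exists_isWalk_mem hcover e
  have hwP := hw.walkVector_mem_flowPoly hrank hcover (hxP.2.ne (edst_ne_source hrank hcover))
  obtain ⟨δ, hδ, hmem⟩ := exists_pos_smul_sub_add_mem_of_mem_intrinsicInterior hx hwP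
  have hwe : 0 < walkVector w e := by
    rw [walkVector_apply]; exact Nat.cast_pos.2 (List.count_pos_iff.2 hew)
  have := ((mem_flowPoly_iff.1 hmem).1 e).1
  simp only [PiLp.add_apply, PiLp.smul_apply, PiLp.sub_apply, hxe, smul_eq_mul] at this
  nlinarith

theorem dilEnt_eq_sub_sum_erase [Fintype V] (x : EuclideanSpace ℝ E) :
    dilEnt esrc t x = ∑ e, x e * log (x e) -
      ∑ v ∈ Finset.univ.erase t, incidentSum esrc v x * log (incidentSum esrc v x) := by
  rw [dilEnt, ← Finset.add_sum_erase _ _ (Finset.mem_univ t)]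
  simp only [if_true, log_one, mul_zero, zero_add, incidentSum_apply]
  congr 1
  exact Finset.sum_congr rfl fun v hv => by simp [Finset.ne_of_mem_erase hv]

theorem dilEnt_eq_sum_perspective [Fintype V] (hnet : ∀ e, esrc e ≠ t)
    {x : EuclideanSpace ℝ E} (hx : ∀ e, 0 < x e) :
    dilEnt esrc t x = ∑ e, incidentSum esrc (esrc e) x *
      (x e / incidentSum esrc (esrc e) x * log (x e / incidentSum esrc (esrc e) x)) := by
  have hvertex : ∑ v ∈ Finset.univ.erase t, incidentSum esrc v x * log (incidentSum esrc v x) =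
      ∑ e, x e * log (incidentSum esrc (esrc e) x) := by
    rw [← Finset.sum_fiberwise_of_maps_to (g := esrc) (t := Finset.univ.erase t)
      (fun e _ => by simp [hnet e])]
    refine Finset.sum_congr rfl fun v _ => ?_
    rw [Finset.sum_congr rfl (g := fun e => x e * log (incidentSum esrc v x))
      fun e he => by rw [(Finset.mem_filter.1 he).2], ← Finset.sum_mul, Finset.sum_filter,
      ← incidentSum_apply]
  rw [dilEnt_eq_sub_sum_erase, hvertex, ← Finset.sum_sub_distrib]
  refine Finset.sum_congr rfl fun e _ => ?_
  have hB := incidentSum_pos esrc hx e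
  rw [log_div (hx e).ne' hB.ne']
  field_simp

theorem hasFDerivAt_dilEnt [Fintype V] (hsrc : ∀ v, v ≠ t → ∃ e, esrc e = v)
    {x : EuclideanSpace ℝ E} (hx : ∀ e, 0 < x e) :
    HasFDerivAt (dilEnt esrc t)
      (∑ e, (log (x e) + 1) • EuclideanSpace.proj e -
        ∑ v ∈ Finset.univ.erase t, (log (incidentSum esrc v x) + 1) • incidentSum esrc v) x := by
  have hpos : ∀ v ∈ Finset.univ.erase t, incidentSum esrc v x ≠ 0 := fun v hv => by
    obtain ⟨e, rfl⟩ := hsrc v (Finset.ne_of_mem_erase hv)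
    exact (incidentSum_pos esrc hx e).ne'
  rw [show dilEnt esrc t = _ from funext dilEnt_eq_sub_sum_erase]
  exact (HasFDerivAt.fun_sum fun e _ =>
    hasFDerivAt_mul_log_comp (EuclideanSpace.proj e) (hx e).ne').sub
      (HasFDerivAt.fun_sum fun v hv => hasFDerivAt_mul_log_comp _ (hpos v hv))

theorem gradient_dilEnt_apply [Fintype V] (hsrc : ∀ v, v ≠ t → ∃ e, esrc e = v)
    (hnet : ∀ e, esrc e ≠ t) {x : EuclideanSpace ℝ E} (hx : ∀ e, 0 < x e) (f : E) :
    gradient (dilEnt esrc t) x f = log (x f) - log (incidentSum esrc (esrc f) x) := by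
  rw [(hasFDerivAt_dilEnt hsrc hx).gradient_apply]
  simp [-incidentSum_apply, incidentSum_single, hnet f]

theorem IsUnitFlow_s13.eq_of_div_incidentSum_eq (hrank : ∀ e, rank (esrc e) < rank (edst e))
    (hnet : ∀ e, esrc e ≠ t) {x y : EuclideanSpace ℝ E} (hx : IsUnitFlow_s13 esrc edst s t x)
    (hy : IsUnitFlow_s13 esrc edst s t y) (hypos : ∀ e, 0 < y e)
    (h : ∀ e, x e / incidentSum esrc (esrc e) x = y e / incidentSum esrc (esrc e) y) :
    x = y := by
  suffices ∀ n, ∀ e, rank (esrc e) = n → x e = y e from PiLp.ext fun e => this _ e rfl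
  intro n
  induction n using Nat.strong_induction_on with
  | _ n ih =>
  rintro e rfl
  have hout : incidentSum esrc (esrc e) x = incidentSum esrc (esrc e) y := by
    by_cases hs : esrc e = s
    · rw [hs, hx.1, hy.1]
    · rw [← hx.2.2 _ hs (hnet e), ← hy.2.2 _ hs (hnet e), incidentSum_apply, incidentSum_apply]
      refine Finset.sum_congr rfl fun f _ => ?_
      split_ifs with hf
      · exact ih _ (hf ▸ hrank f) f rfl
      · rfl
  have := h e
  rwa [hout, div_left_inj' (incidentSum_pos esrc hypos e).ne'] at this

theorem strictConvexOn_dilEnt [Fintype V] (hrank : ∀ e, rank (esrc e) < rank (edst e))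
    (hnet : ∀ e, esrc e ≠ t) :
    StrictConvexOn ℝ ({x | ∀ e, 0 < x e} ∩ affineSpan ℝ (flowPoly esrc edst s t))
      (dilEnt esrc t) := by
  have hconvex : Convex ℝ {x : EuclideanSpace ℝ E | ∀ e, 0 < x e} :=
    fun x hx y hy a b ha hb hab e => by simpa using convex_Ioi (0 : ℝ) (hx e) (hy e) ha hb hab
  refine ⟨hconvex.inter (affineSpan ℝ _).convex, ?_⟩
  rintro x ⟨hx, hxs⟩ y ⟨hy, hys⟩ hxy a b ha hb hab
  have hflow := fun z (hz : z ∈ affineSpan ℝ (flowPoly esrc edst s t)) =>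
    IsUnitFlow_s13.of_mem_affineSpan (fun w hw => (mem_flowPoly_iff.1 hw).2) hz
  obtain ⟨e₀, he₀⟩ :
      ∃ e, x e / incidentSum esrc (esrc e) x ≠ y e / incidentSum esrc (esrc e) y := by
    by_contra! h
    exact hxy ((hflow x hxs).eq_of_div_incidentSum_eq hrank hnet (hflow y hys) hy h)
  have hcoord : ∀ e, (a • x + b • y) e = a * x e + b * y e := fun e => by simp
  have hout : ∀ v, incidentSum esrc v (a • x + b • y) =
      a * incidentSum esrc v x + b * incidentSum esrc v y := fun v => by simp [-incidentSum_apply]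
  rw [dilEnt_eq_sum_perspective hnet (hconvex hx hy ha.le hb.le hab),
    dilEnt_eq_sum_perspective hnet hx, dilEnt_eq_sum_perspective hnet hy, smul_eq_mul,
    smul_eq_mul, Finset.mul_sum, Finset.mul_sum, ← Finset.sum_add_distrib]
  have hB := fun e => incidentSum_pos esrc hx e
  have hB' := fun e => incidentSum_pos esrc hy e
  have hmem := fun e => Set.mem_Ici.2 (div_nonneg (hx e).le (hB e).le)
  have hmem' := fun e => Set.mem_Ici.2 (div_nonneg (hy e).le (hB' e).le)
  refine Finset.sum_lt_sum (fun e _ => ?_) ⟨e₀, Finset.mem_univ _, ?_⟩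
  · rw [hcoord, hout]
    exact convexOn_mul_log.perspective_le ha hb (hB e) (hB' e) (hmem e) (hmem' e)
  · rw [hcoord, hout]
    exact strictConvexOn_mul_log.perspective_lt ha hb (hB e₀) (hB' e₀) (hmem e₀) (hmem' e₀) he₀

theorem IsWalk.exists_zero_of_pos_incidentSum (hnes : ∀ e, edst e ≠ s)
    (hnet : ∀ e, esrc e ≠ t) {x : EuclideanSpace ℝ E} (h0 : ∀ e, 0 ≤ x e)
    (hx : IsUnitFlow_s13 esrc edst s t x) {u : V} {p : List E} (hp : IsWalk esrc edst u t p)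
    (hu : 0 < incidentSum esrc u x) {e : E} (he : e ∈ p) (hxe : x e = 0) :
    ∃ f, x f = 0 ∧ 0 < incidentSum esrc (esrc f) x := by
  induction p generalizing u with
  | nil => cases he
  | cons e₀ es ih =>
    obtain ⟨rfl, hes⟩ := hp
    by_cases h₀ : x e₀ = 0
    · exact ⟨e₀, h₀, hu⟩
    have he' : e ∈ es := (List.mem_cons.1 he).resolve_left (by rintro rfl; exact h₀ hxe)
    have hdt : edst e₀ ≠ t := by
      intro hdt
      obtain ⟨e', es', rfl⟩ := List.exists_cons_of_ne_nil (List.ne_nil_of_mem he')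
      exact hnet e' (hes.1.trans hdt)
    refine ih hes ?_ he'
    rw [← hx.2.2 _ (hnes e₀) hdt]
    exact ((h0 e₀).lt_of_ne' h₀).trans_le (le_incidentSum edst h0 e₀)

theorem tendsto_norm_gradient_dilEnt_atTop [Fintype V] (hsrc : ∀ v, v ≠ t → ∃ e, esrc e = v)
    (hnet : ∀ e, esrc e ≠ t) {xs : EuclideanSpace ℝ E} {xn : ℕ → EuclideanSpace ℝ E}
    (hxn : ∀ n e, 0 < xn n e) (hlim : Tendsto xn atTop (𝓝 xs)) {f : E} (hf : xs f = 0)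
    (hpos : 0 < incidentSum esrc (esrc f) xs) :
    Tendsto (fun n => ‖gradient (dilEnt esrc t) (xn n)‖) atTop atTop := by
  have hout : Tendsto (fun n => log (incidentSum esrc (esrc f) (xn n))) atTop
      (𝓝 (log (incidentSum esrc (esrc f) xs))) :=
    (continuousAt_log hpos.ne').tendsto.comp
      (((incidentSum esrc (esrc f)).continuous.tendsto xs).comp hlim)
  have hedge : Tendsto (fun n => xn n f) atTop (𝓝[>] 0) := by
    refine tendsto_nhdsWithin_iff.2 ⟨?_, Eventually.of_forall fun n => hxn n f⟩
    have h := ((by fun_prop : Continuous fun x : EuclideanSpace ℝ E => x f).tendsto xs).comp hlim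
    rwa [hf] at h
  have hlog := (tendsto_neg_atTop_iff.2 (tendsto_log_nhdsGT_zero.comp hedge)).atTop_add hout
  refine tendsto_atTop_mono (fun n => ?_) hlog
  calc -log (xn n f) + log (incidentSum esrc (esrc f) (xn n))
      = -gradient (dilEnt esrc t) (xn n) f := by
        rw [gradient_dilEnt_apply hsrc hnet (hxn n)]; ring
    _ ≤ ‖gradient (dilEnt esrc t) (xn n) f‖ := neg_le_abs _
    _ ≤ ‖gradient (dilEnt esrc t) (xn n)‖ := PiLp.norm_apply_le _ _

end Flows

theorem dilated_entropy_legendre_general {V E : Type*} [Fintype V] [Fintype E]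
    (esrc edst : E → V) (s t : V)
    (rank : V → ℕ) (hrank : ∀ e, rank (esrc e) < rank (edst e))
    (hcover : ∀ v : V, ∃ p q, IsWalk esrc edst s v p ∧ IsWalk esrc edst v t q) :
    DifferentiableOn ℝ (dilEnt esrc t) (intrinsicInterior ℝ (flowPoly esrc edst s t)) ∧
    StrictConvexOn ℝ (intrinsicInterior ℝ (flowPoly esrc edst s t)) (dilEnt esrc t) ∧
    ∀ xs ∈ flowPoly esrc edst s t, xs ∉ intrinsicInterior ℝ (flowPoly esrc edst s t) →
      ∀ xn : ℕ → EuclideanSpace ℝ E,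
        (∀ n, xn n ∈ intrinsicInterior ℝ (flowPoly esrc edst s t)) →
        Tendsto xn atTop (nhds xs) →
        Tendsto (fun n => ‖gradient (dilEnt esrc t) (xn n)‖) atTop atTop := by
  have hnes := edst_ne_source hrank hcover
  have hnet := esrc_ne_sink hrank hcover
  have hsrc : ∀ v, v ≠ t → ∃ e, esrc e = v := fun v => exists_esrc_eq hcover
  rw [intrinsicInterior_flowPoly hrank hcover]
  refine ⟨fun x hx => (hasFDerivAt_dilEnt hsrc hx.1).differentiableAt.differentiableWithinAt,
    strictConvexOn_dilEnt hrank hnet, fun xs hxs hnot xn hxn hlim => ?_⟩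
  obtain ⟨h01, hflow⟩ := mem_flowPoly_iff.1 hxs
  obtain ⟨e, he⟩ : ∃ e, xs e = 0 := by
    by_contra! h
    exact hnot ⟨fun e => (h01 e).1.lt_of_ne' (h e), subset_affineSpan ℝ _ hxs⟩
  obtain ⟨w, hw, hew⟩ := exists_isWalk_mem hcover e
  obtain ⟨f, hf, hfpos⟩ := hw.exists_zero_of_pos_incidentSum hnes hnet (fun e => (h01 e).1)
    hflow (by rw [hflow.1]; exact one_pos) hew he
  exact tendsto_norm_gradient_dilEnt_atTop hsrc hnet (fun n => (hxn n).1) hlim hf hfpos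

theorem dilated_entropy_legendre {V E : Type*} [Fintype V] [Fintype E]
    (esrc edst : E → V) (s t : V)
    (rank : V → ℕ) (hrank : ∀ e, rank (esrc e) < rank (edst e))
    (hcover : ∀ v : V, ∃ p q, IsWalk esrc edst s v p ∧ IsWalk esrc edst v t q)
    (htwo : ∃ p q : List E, p ≠ q ∧ IsWalk esrc edst s t p ∧ IsWalk esrc edst s t q) :
    DifferentiableOn ℝ (dilEnt esrc t) (intrinsicInterior ℝ (flowPoly esrc edst s t)) ∧
    StrictConvexOn ℝ (intrinsicInterior ℝ (flowPoly esrc edst s t)) (dilEnt esrc t) ∧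
    ∀ xs ∈ flowPoly esrc edst s t, xs ∉ intrinsicInterior ℝ (flowPoly esrc edst s t) →
      ∀ xn : ℕ → EuclideanSpace ℝ E,
        (∀ n, xn n ∈ intrinsicInterior ℝ (flowPoly esrc edst s t)) →
        Tendsto xn atTop (nhds xs) →
        Tendsto (fun n => ‖gradient (dilEnt esrc t) (xn n)‖) atTop atTop :=
  dilated_entropy_legendre_general esrc edst s t rank hrank hcover
end

section
/- Let G = (V, E) be a finite DAG with source s, sink t, every vertex on some s-t path. Let y ∈ ℝ^E be an edge-weight vector such that every s-t path has total weight in [−1, 1]. For each vertex v, let d_min(v) and d_max(v) be the weights of the shortest and longest paths from v to t under y. Define y'[(u,v)] := y[(u,v)] + d_min(v) − d_min(u). Then (a) y'[e] ≥ 0 for every edge e; (b) for every z ∈ span(X), ⟨y', z⟩ = ⟨y, z⟩ − d_min(s)·z[s] where z[s] := ∑_{e ∈ δ⁺(s)} z[e]; (c) for every x in the flow polytope co(X), 0 ≤ ⟨y', x⟩ ≤ 2. -/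
/-!
Shifting the losses by the potential `dmin` changes each edge weight by a telescoping term, so on
any flow conserved at the internal vertices the total changes only by the contribution of `s`
(`t` has potential `0` and `s` has no incoming edges): this is (b). The Bellman inequality for
`dmin` gives (a). For (c), the same identity with the potential `dmax`, whose Bellman inequality
points the other way, bounds `⟨y, x⟩` by `dmax s ≤ 1`, while `-dmin s ≤ 1`.
-/

open Classical

section Walks

variable {V E : Type*} {esrc edst : E → V}

theorem IsWalk.eq_nil_of_forall_src_ne {u v : V} {p : List E}
    (hu : ∀ e, esrc e ≠ u) (hp : IsWalk esrc edst u v p) : p = [] := by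
  cases p with
  | nil => rfl
  | cons e _ => exact absurd hp.1 (hu e)

variable {t : V} {y : E → ℝ} {d : V → ℝ}

theorem potential_eq_zero_of_forall_src_ne (ht : ∀ e, esrc e ≠ t)
    (hex : ∃ p, IsWalk esrc edst t t p ∧ d t = (p.map y).sum) : d t = 0 := by
  obtain ⟨p, hp, hd⟩ := hex
  simpa [hp.eq_nil_of_forall_src_ne ht] using hd

theorem min_potential_le_add
    (hle : ∀ v p, IsWalk esrc edst v t p → d v ≤ (p.map y).sum)
    (hex : ∀ v, ∃ p, IsWalk esrc edst v t p ∧ d v = (p.map y).sum) (e : E) :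
    d (esrc e) ≤ y e + d (edst e) := by
  obtain ⟨p, hp, hd⟩ := hex (edst e)
  simpa [hd] using hle (esrc e) (e :: p) ⟨rfl, hp⟩

theorem add_le_max_potential
    (hge : ∀ v p, IsWalk esrc edst v t p → (p.map y).sum ≤ d v)
    (hex : ∀ v, ∃ p, IsWalk esrc edst v t p ∧ d v = (p.map y).sum) (e : E) :
    y e + d (edst e) ≤ d (esrc e) := by
  obtain ⟨p, hp, hd⟩ := hex (edst e)
  simpa [hd] using hge (esrc e) (e :: p) ⟨rfl, hp⟩

end Walks

section Flows

variable {V E : Type*} [Fintype V] [Fintype E]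

theorem sum_comp_mul_eq_sum_mul_sum_fiber (φ : E → V) (g : V → ℝ) (z : E → ℝ) :
    ∑ e, g (φ e) * z e = ∑ v, g v * ∑ e, if φ e = v then z e else 0 := by
  simp only [Finset.mul_sum, mul_ite, mul_zero]
  rw [Finset.sum_comm]
  simp

variable (esrc edst : E → V) {s t : V}

theorem sum_shifted_mul_eq (hs : ∀ e, edst e ≠ s) (f : V → ℝ) (hft : f t = 0) (y z : E → ℝ)
    (hz : ∀ v, v ≠ s → v ≠ t →
      (∑ e, if edst e = v then z e else 0) = ∑ e, if esrc e = v then z e else 0) :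
    ∑ e, (y e + f (edst e) - f (esrc e)) * z e
      = ∑ e, y e * z e - f s * ∑ e, if esrc e = s then z e else 0 := by
  have hsplit : ∑ e, (y e + f (edst e) - f (esrc e)) * z e
      = ∑ e, y e * z e + (∑ e, f (edst e) * z e - ∑ e, f (esrc e) * z e) := by
    rw [← Finset.sum_sub_distrib, ← Finset.sum_add_distrib]
    exact Finset.sum_congr rfl fun e _ => by ring
  have hin_s : (∑ e, if edst e = s then z e else 0) = 0 :=
    Finset.sum_eq_zero fun e _ => if_neg (hs e)
  rw [hsplit, sum_comp_mul_eq_sum_mul_sum_fiber edst, sum_comp_mul_eq_sum_mul_sum_fiber esrc,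
    ← Finset.sum_sub_distrib, Finset.sum_eq_single s]
  · rw [hin_s]; ring
  · intro v _ hvs
    by_cases hvt : v = t
    · rw [hvt, hft]; ring
    · rw [hz v hvs hvt, sub_self]
  · simp
end Flows

theorem shifted_losses_properties_general {V E : Type*} [Fintype V] [Fintype E]
    (esrc edst : E → V) (s t : V)
    (hnos : ∀ e, edst e ≠ s) (hnot : ∀ e, esrc e ≠ t)
    (y : E → ℝ) (hy : ∀ p, IsWalk esrc edst s t p → |(p.map y).sum| ≤ 1)
    (dmin dmax : V → ℝ)
    (hdmin_le : ∀ v p, IsWalk esrc edst v t p → dmin v ≤ (p.map y).sum)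
    (hdmin_ex : ∀ v, ∃ p, IsWalk esrc edst v t p ∧ dmin v = (p.map y).sum)
    (hdmax_ge : ∀ v p, IsWalk esrc edst v t p → (p.map y).sum ≤ dmax v)
    (hdmax_ex : ∀ v, ∃ p, IsWalk esrc edst v t p ∧ dmax v = (p.map y).sum) :
    -- (a) the shifted loss vector is nonnegative
    (∀ e, 0 ≤ y e + dmin (edst e) - dmin (esrc e)) ∧
    -- (b) for any `z` satisfying flow conservation at internal vertices (span of paths)
    (∀ z : E → ℝ,
      (∀ v, v ≠ s → v ≠ t →
        (∑ e : E, if edst e = v then z e else 0) = (∑ e : E, if esrc e = v then z e else 0)) →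
      ∑ e : E, (y e + dmin (edst e) - dmin (esrc e)) * z e
        = (∑ e : E, y e * z e) - dmin s * (∑ e : E, if esrc e = s then z e else 0)) ∧
    -- (c) for any `x` in the flow polytope
    (∀ x : E → ℝ, (∀ e, 0 ≤ x e ∧ x e ≤ 1) →
      (∑ e : E, if esrc e = s then x e else 0) = 1 →
      (∑ e : E, if edst e = t then x e else 0) = 1 →
      (∀ v, v ≠ s → v ≠ t →
        (∑ e : E, if edst e = v then x e else 0) = (∑ e : E, if esrc e = v then x e else 0)) →
      0 ≤ ∑ e : E, (y e + dmin (edst e) - dmin (esrc e)) * x e ∧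
        ∑ e : E, (y e + dmin (edst e) - dmin (esrc e)) * x e ≤ 2) := by
  have hdmin_t : dmin t = 0 := potential_eq_zero_of_forall_src_ne hnot (hdmin_ex t)
  have hdmax_t : dmax t = 0 := potential_eq_zero_of_forall_src_ne hnot (hdmax_ex t)
  have hshift_nonneg : ∀ e, 0 ≤ y e + dmin (edst e) - dmin (esrc e) := fun e => by
    linarith [min_potential_le_add hdmin_le hdmin_ex e]
  have hshift := fun z => sum_shifted_mul_eq esrc edst hnos dmin hdmin_t y z
  refine ⟨hshift_nonneg, hshift, fun x hx hxs _ hxc => ⟨?_, ?_⟩⟩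
  · exact Finset.sum_nonneg fun e _ => mul_nonneg (hshift_nonneg e) (hx e).1
  · have hyx : ∑ e, y e * x e ≤ dmax s := by
      have hle : ∑ e, (y e + dmax (edst e) - dmax (esrc e)) * x e ≤ 0 :=
        Finset.sum_nonpos fun e _ => mul_nonpos_of_nonpos_of_nonneg
          (by linarith [add_le_max_potential hdmax_ge hdmax_ex e]) (hx e).1
      rw [sum_shifted_mul_eq esrc edst hnos dmax hdmax_t y x hxc, hxs] at hle
      linarith
    obtain ⟨p, hp, hdmin_s⟩ := hdmin_ex s
    obtain ⟨q, hq, hdmax_s⟩ := hdmax_ex s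
    have hdmin_s_bound := abs_le.mp (hdmin_s ▸ hy p hp)
    have hdmax_s_bound := abs_le.mp (hdmax_s ▸ hy q hq)
    rw [hshift x hxc, hxs]
    linarith

theorem shifted_losses_properties {V E : Type*} [Fintype V] [Fintype E]
    (esrc edst : E → V) (s t : V)
    (rank : V → ℕ) (hrank : ∀ e, rank (esrc e) < rank (edst e))
    (hnos : ∀ e, edst e ≠ s) (hnot : ∀ e, esrc e ≠ t)
    (hcover : ∀ v : V, ∃ p q, IsWalk esrc edst s v p ∧ IsWalk esrc edst v t q)
    (y : E → ℝ) (hy : ∀ p, IsWalk esrc edst s t p → |(p.map y).sum| ≤ 1)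
    (dmin dmax : V → ℝ)
    (hdmin_le : ∀ v p, IsWalk esrc edst v t p → dmin v ≤ (p.map y).sum)
    (hdmin_ex : ∀ v, ∃ p, IsWalk esrc edst v t p ∧ dmin v = (p.map y).sum)
    (hdmax_ge : ∀ v p, IsWalk esrc edst v t p → (p.map y).sum ≤ dmax v)
    (hdmax_ex : ∀ v, ∃ p, IsWalk esrc edst v t p ∧ dmax v = (p.map y).sum) :
    -- (a) the shifted loss vector is nonnegative
    (∀ e, 0 ≤ y e + dmin (edst e) - dmin (esrc e)) ∧
    -- (b) for any `z` satisfying flow conservation at internal vertices (span of paths)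
    (∀ z : E → ℝ,
      (∀ v, v ≠ s → v ≠ t →
        (∑ e : E, if edst e = v then z e else 0) = (∑ e : E, if esrc e = v then z e else 0)) →
      ∑ e : E, (y e + dmin (edst e) - dmin (esrc e)) * z e
        = (∑ e : E, y e * z e) - dmin s * (∑ e : E, if esrc e = s then z e else 0)) ∧
    -- (c) for any `x` in the flow polytope
    (∀ x : E → ℝ, (∀ e, 0 ≤ x e ∧ x e ≤ 1) →
      (∑ e : E, if esrc e = s then x e else 0) = 1 →
      (∑ e : E, if edst e = t then x e else 0) = 1 →
      (∀ v, v ≠ s → v ≠ t →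
        (∑ e : E, if edst e = v then x e else 0) = (∑ e : E, if esrc e = v then x e else 0)) →
      0 ≤ ∑ e : E, (y e + dmin (edst e) - dmin (esrc e)) * x e ∧
        ∑ e : E, (y e + dmin (edst e) - dmin (esrc e)) * x e ≤ 2) :=
  shifted_losses_properties_general esrc edst s t hnos hnot y hy dmin dmax hdmin_le hdmin_ex
    hdmax_ge hdmax_ex
end

section
/- Let G = (V, E) be a finite DAG with source s and sink t, and let y ∈ ℝ^E assign weights so that every s-t path has total weight in [−1, 1]. For each vertex v let d_min(v), d_max(v) be the weights of the shortest and longest s-to-v paths, and set y'[(u,v)] := y[(u,v)] + d_min(u) − d_min(v) and d_Δ(v) := d_max(v) − d_min(v). Then for every s-t path p (with vertex sequence s = v_0, v_1, …, v_k = t): ∑_{i=1}^k y'[(v_{i-1}, v_i)]² ≤ d_Δ(t)² ≤ 4. -/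
namespace IsWalk

variable {V E : Type*} {esrc edst : E → V}

theorem append_s15 {u v w : V} {p q : List E} (hp : IsWalk esrc edst u v p)
    (hq : IsWalk esrc edst v w q) : IsWalk esrc edst u w (p ++ q) := by
  induction p generalizing u with
  | nil => cases hp; exact hq
  | cons e es ih => exact ⟨hp.1, ih hp.2⟩

theorem concat {u : V} {p : List E} {e : E} (hp : IsWalk esrc edst u (esrc e) p) :
    IsWalk esrc edst u (edst e) (p ++ [e]) :=
  hp.append_s15 ⟨rfl, rfl⟩

theorem sum_sq_le_sq_sub_sq {x : E → ℝ} {φ : V → ℝ} (hφ : ∀ v, 0 ≤ φ v)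
    (hx_nonneg : ∀ e, 0 ≤ x e) (hx_le : ∀ e, x e ≤ φ (edst e) - φ (esrc e)) :
    ∀ {u v : V} {p : List E}, IsWalk esrc edst u v p →
      (p.map (fun e => x e ^ 2)).sum ≤ φ v ^ 2 - φ u ^ 2
  | u, v, [], hp => by cases hp; simp
  | u, v, e :: es, ⟨he, hes⟩ => by
    subst he
    have hes_le := sum_sq_le_sq_sub_sq hφ hx_nonneg hx_le hes
    have he_le : x e ^ 2 ≤ φ (edst e) ^ 2 - φ (esrc e) ^ 2 := by
      nlinarith [hx_nonneg e, hx_le e, hφ (esrc e)]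
    simp only [List.map_cons, List.sum_cons]
    linarith

end IsWalk

section WalkBounds

variable {V E : Type*} {esrc edst : E → V} {s : V} {y : E → ℝ} {d : V → ℝ}

theorem le_add_of_forall_le_walk_sum
    (hle : ∀ v p, IsWalk esrc edst s v p → d v ≤ (p.map y).sum) {e : E}
    (hex : ∃ p, IsWalk esrc edst s (esrc e) p ∧ d (esrc e) = (p.map y).sum) :
    d (edst e) ≤ d (esrc e) + y e := by
  obtain ⟨p, hp, hd⟩ := hex
  simpa [hd] using hle _ _ hp.concat

theorem add_le_of_forall_walk_sum_le
    (hge : ∀ v p, IsWalk esrc edst s v p → (p.map y).sum ≤ d v) {e : E}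
    (hex : ∃ p, IsWalk esrc edst s (esrc e) p ∧ d (esrc e) = (p.map y).sum) :
    d (esrc e) + y e ≤ d (edst e) := by
  obtain ⟨p, hp, hd⟩ := hex
  simpa [hd] using hge _ _ hp.concat

end WalkBounds

theorem shifted_losses_sq_sum_le_general {V E : Type*}
    (esrc edst : E → V) (s t : V)
    (y : E → ℝ) (hy : ∀ p, IsWalk esrc edst s t p → |(p.map y).sum| ≤ 1)
    (dmin dmax : V → ℝ)
    (hdmin_le : ∀ v p, IsWalk esrc edst s v p → dmin v ≤ (p.map y).sum)
    (hdmin_ex : ∀ v, ∃ p, IsWalk esrc edst s v p ∧ dmin v = (p.map y).sum)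
    (hdmax_ge : ∀ v p, IsWalk esrc edst s v p → (p.map y).sum ≤ dmax v)
    (hdmax_ex : ∀ v, ∃ p, IsWalk esrc edst s v p ∧ dmax v = (p.map y).sum) :
    ∀ p, IsWalk esrc edst s t p →
      (p.map (fun e => (y e + dmin (esrc e) - dmin (edst e)) ^ 2)).sum ≤
        (dmax t - dmin t) ^ 2 ∧
      (dmax t - dmin t) ^ 2 ≤ 4 := by
  intro p hp
  have hΔ_nonneg : ∀ v, 0 ≤ dmax v - dmin v := fun v => by
    obtain ⟨q, hq, hq_sum⟩ := hdmin_ex v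
    linarith [hdmax_ge v q hq]
  have hΔt_le : dmax t - dmin t ≤ 2 := by
    obtain ⟨q, hq, hq_sum⟩ := hdmax_ex t
    obtain ⟨r, hr, hr_sum⟩ := hdmin_ex t
    linarith [(abs_le.mp (hy q hq)).2, (abs_le.mp (hy r hr)).1]
  have hmin e := le_add_of_forall_le_walk_sum hdmin_le (hdmin_ex (esrc e))
  have hmax e := add_le_of_forall_walk_sum_le hdmax_ge (hdmax_ex (esrc e))
  have hsum := hp.sum_sq_le_sq_sub_sq (x := fun e => y e + dmin (esrc e) - dmin (edst e))
    hΔ_nonneg (fun e => by linarith [hmin e]) (fun e => by linarith [hmin e, hmax e])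
  exact ⟨by nlinarith [sq_nonneg (dmax s - dmin s)], by nlinarith [hΔ_nonneg t]⟩

theorem shifted_losses_sq_sum_le {V E : Type*} [Fintype V] [Fintype E]
    (esrc edst : E → V) (s t : V)
    (rank : V → ℕ) (hrank : ∀ e, rank (esrc e) < rank (edst e))
    (y : E → ℝ) (hy : ∀ p, IsWalk esrc edst s t p → |(p.map y).sum| ≤ 1)
    (dmin dmax : V → ℝ)
    (hdmin_le : ∀ v p, IsWalk esrc edst s v p → dmin v ≤ (p.map y).sum)
    (hdmin_ex : ∀ v, ∃ p, IsWalk esrc edst s v p ∧ dmin v = (p.map y).sum)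
    (hdmax_ge : ∀ v p, IsWalk esrc edst s v p → (p.map y).sum ≤ dmax v)
    (hdmax_ex : ∀ v, ∃ p, IsWalk esrc edst s v p ∧ dmax v = (p.map y).sum) :
    ∀ p, IsWalk esrc edst s t p →
      (p.map (fun e => (y e + dmin (esrc e) - dmin (edst e)) ^ 2)).sum ≤
        (dmax t - dmin t) ^ 2 ∧
      (dmax t - dmin t) ^ 2 ≤ 4 :=
  shifted_losses_sq_sum_le_general esrc edst s t y hy dmin dmax hdmin_le hdmin_ex hdmax_ge hdmax_ex
end

section
/- Let d, m be positive integers with x[i] > 0 for all i, ∑_i x[i] = m, and z ∈ ℝ^d arbitrary. Define the local norm ‖z‖²_{∇²φ(x)} = ∑_{i=1}^d z[i]²·(2 + 1/(m·x[i])), where φ(x) = ∑_i (x[i]² + (1/m)·x[i]·ln x[i]). Then ‖z‖²_{∇²φ(x)} ≥ 2‖z‖_∞² + (1/m²)‖z‖_1². -/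
/-! The local norm splits as `2 ∑ zᵢ² + (1/m) ∑ zᵢ²/xᵢ`. The first sum dominates `‖z‖_∞²`, and
Cauchy–Schwarz against the weights `xᵢ`, whose total is `m`, gives `∑ zᵢ²/xᵢ ≥ ‖z‖₁²/m`. -/

open Finset

lemma sq_iSup_abs_le_sum_sq {ι : Type*} [Fintype ι] (z : ι → ℝ) :
    (⨆ i, |z i|) ^ 2 ≤ ∑ i, z i ^ 2 := by
  cases isEmpty_or_nonempty ι
  · simp
  · obtain ⟨i, hi⟩ := exists_eq_ciSup_of_finite (f := fun i ↦ |z i|)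
    rw [← hi, sq_abs]
    exact single_le_sum (fun j _ ↦ sq_nonneg (z j)) (mem_univ i)

lemma sq_sum_abs_le_sum_mul_sum_sq_div {ι : Type*} (s : Finset ι) (z : ι → ℝ) {x : ι → ℝ}
    (hx : ∀ i ∈ s, 0 < x i) :
    (∑ i ∈ s, |z i|) ^ 2 ≤ (∑ i ∈ s, x i) * ∑ i ∈ s, z i ^ 2 / x i :=
  sum_sq_le_sum_mul_sum_of_sq_le_mul s (fun i hi ↦ (hx i hi).le)
    (fun i hi ↦ div_nonneg (sq_nonneg _) (hx i hi).le)
    fun i hi ↦ by rw [sq_abs, mul_div_cancel₀ _ (hx i hi).ne']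

lemma one_div_sq_mul_self {G₀ : Type*} [CommGroupWithZero G₀] (a : G₀) : 1 / a ^ 2 * a = 1 / a := by
  rw [one_div_mul_eq_div, sq, div_self_mul_self', one_div]

theorem mset_local_norm_lower_general (d m : ℕ)
    (x z : Fin d → ℝ) (hx : ∀ i, 0 < x i) (hsum : ∑ i, x i = (m : ℝ)) :
    2 * (⨆ i, |z i|) ^ 2 + (1 / (m : ℝ) ^ 2) * (∑ i, |z i|) ^ 2 ≤
      ∑ i, (z i) ^ 2 * (2 + 1 / ((m : ℝ) * x i)) := by
  have hcs := sq_sum_abs_le_sum_mul_sum_sq_div univ z fun i _ ↦ hx i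
  rw [hsum] at hcs
  have hsplit : ∑ i, z i ^ 2 * (2 + 1 / ((m : ℝ) * x i))
      = 2 * ∑ i, z i ^ 2 + 1 / (m : ℝ) ^ 2 * ((m : ℝ) * ∑ i, z i ^ 2 / x i) := by
    rw [← mul_assoc, one_div_sq_mul_self, mul_sum, mul_sum, ← sum_add_distrib]
    exact sum_congr rfl fun i _ ↦ by ring
  rw [hsplit]
  gcongr
  exact sq_iSup_abs_le_sum_sq z

theorem mset_local_norm_lower (d m : ℕ) (hd : 0 < d) (hm : 0 < m)
    (x z : Fin d → ℝ) (hx : ∀ i, 0 < x i) (hsum : ∑ i, x i = (m : ℝ)) :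
    2 * (⨆ i, |z i|) ^ 2 + (1 / (m : ℝ) ^ 2) * (∑ i, |z i|) ^ 2 ≤
      ∑ i, (z i) ^ 2 * (2 + 1 / ((m : ℝ) * x i)) :=
  mset_local_norm_lower_general d m x z hx hsum
end
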